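/- arXiv:2206.13927 — 4 statements merged into one kernel-verified Lean document; each statement's English description precedes it below -/
import Mathlib

section
/- The axiom system E_RBB is sound modulo rooted branching bisimilarity over CCS_LC: for every equation t ≈ u in E_RBB and every closed substitution σ, σ(t) ~RBB σ(u). Consequently, E_RBB ⊢ t ≈ u implies σ(t) ~RBB σ(u) for every closed substitution σ. -/
/-- Observable actions: names and co-names. -/
inductive Obs (Name : Type) : Type where
  | pos : Name → Obs Name
  | neg : Name → Obs Name
  deriving DecidableEq

/-- Complementation of observable actions: `ā̄ = a`. -/
def Obs.bar {Name : Type} : Obs Name → Obs Name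
  | .pos a => .neg a
  | .neg a => .pos a

/-- Actions: observable actions plus the silent action τ. -/
inductive Act (Name : Type) : Type where
  | obs : Obs Name → Act Name
  | tau : Act Name
  deriving DecidableEq

/-- Open CCS_LC terms: CCS terms extended with left merge and communication merge. -/
inductive TermLC (Name : Type) : Type where
  | nil : TermLC Name
  | var : ℕ → TermLC Name
  | pre : Act Name → TermLC Name → TermLC Name
  | plus : TermLC Name → TermLC Name → TermLC Name
  | par : TermLC Name → TermLC Name → TermLC Name
  | lmerge : TermLC Name → TermLC Name → TermLC Name
  | cmerge : TermLC Name → TermLC Name → TermLC Name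
  deriving DecidableEq

/-- CCS_LC processes (closed terms). -/
inductive ProcLC (Name : Type) : Type where
  | nil : ProcLC Name
  | pre : Act Name → ProcLC Name → ProcLC Name
  | plus : ProcLC Name → ProcLC Name → ProcLC Name
  | par : ProcLC Name → ProcLC Name → ProcLC Name
  | lmerge : ProcLC Name → ProcLC Name → ProcLC Name
  | cmerge : ProcLC Name → ProcLC Name → ProcLC Name
  deriving DecidableEq

/-- SOS transition relation for CCS_LC processes. -/
inductive TransLC {Name : Type} : ProcLC Name → Act Name → ProcLC Name → Prop where
  | pre : ∀ (μ : Act Name) (p : ProcLC Name), TransLC (.pre μ p) μ p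
  | plusL : ∀ {p p' q : ProcLC Name} {μ : Act Name}, TransLC p μ p' → TransLC (.plus p q) μ p'
  | plusR : ∀ {p q q' : ProcLC Name} {μ : Act Name}, TransLC q μ q' → TransLC (.plus p q) μ q'
  | parL : ∀ {p p' q : ProcLC Name} {μ : Act Name}, TransLC p μ p' → TransLC (.par p q) μ (.par p' q)
  | parR : ∀ {p q q' : ProcLC Name} {μ : Act Name}, TransLC q μ q' → TransLC (.par p q) μ (.par p q')
  | comm : ∀ {p p' q q' : ProcLC Name} {α : Obs Name},
      TransLC p (.obs α) p' → TransLC q (.obs α.bar) q' → TransLC (.par p q) .tau (.par p' q')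
  | lmerge : ∀ {p p' : ProcLC Name} {μ : Act Name} (q : ProcLC Name),
      TransLC p μ p' → TransLC (.lmerge p q) μ (.par p' q)
  | cmerge : ∀ {p p' q q' : ProcLC Name} {α : Obs Name},
      TransLC p (.obs α) p' → TransLC q (.obs α.bar) q' → TransLC (.cmerge p q) .tau (.par p' q')

/-- `→ε` on CCS_LC processes. -/
def EpsLC {Name : Type} : ProcLC Name → ProcLC Name → Prop :=
  Relation.ReflTransGen (fun p q => TransLC p Act.tau q)

/-- `R` is a branching bisimulation on CCS_LC processes. -/
def IsBBLC {Name : Type} (R : ProcLC Name → ProcLC Name → Prop) : Prop :=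
  Symmetric R ∧
  ∀ p q, R p q → ∀ μ p', TransLC p μ p' →
    (μ = Act.tau ∧ R p' q) ∨
    ∃ q'' q', EpsLC q q'' ∧ TransLC q'' μ q' ∧ R p q'' ∧ R p' q'

/-- Branching bisimilarity on CCS_LC processes. -/
def BBLC {Name : Type} (p q : ProcLC Name) : Prop :=
  ∃ R : ProcLC Name → ProcLC Name → Prop, IsBBLC R ∧ R p q

/-- Rooted branching bisimilarity on CCS_LC processes. -/
def RBBLC {Name : Type} (p q : ProcLC Name) : Prop :=
  (∀ (μ : Act Name) (p' : ProcLC Name), TransLC p μ p' → ∃ q', TransLC q μ q' ∧ BBLC p' q') ∧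
  (∀ (μ : Act Name) (q' : ProcLC Name), TransLC q μ q' → ∃ p', TransLC p μ p' ∧ BBLC p' q')

/-- Applying a substitution to a CCS_LC term. -/
def TermLC.subst {Name : Type} (σ : ℕ → TermLC Name) : TermLC Name → TermLC Name
  | .nil => .nil
  | .var x => σ x
  | .pre μ t => .pre μ (TermLC.subst σ t)
  | .plus t u => .plus (TermLC.subst σ t) (TermLC.subst σ u)
  | .par t u => .par (TermLC.subst σ t) (TermLC.subst σ u)
  | .lmerge t u => .lmerge (TermLC.subst σ t) (TermLC.subst σ u)
  | .cmerge t u => .cmerge (TermLC.subst σ t) (TermLC.subst σ u)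

/-- Applying a closed substitution to a CCS_LC term. -/
def TermLC.substP {Name : Type} (σ : ℕ → ProcLC Name) : TermLC Name → ProcLC Name
  | .nil => .nil
  | .var x => σ x
  | .pre μ t => .pre μ (TermLC.substP σ t)
  | .plus t u => .plus (TermLC.substP σ t) (TermLC.substP σ u)
  | .par t u => .par (TermLC.substP σ t) (TermLC.substP σ u)
  | .lmerge t u => .lmerge (TermLC.substP σ t) (TermLC.substP σ u)
  | .cmerge t u => .cmerge (TermLC.substP σ t) (TermLC.substP σ u)

/-- Equational-logic derivability from an axiom system `E` over CCS_LC terms. -/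
inductive DerivLC {Name : Type} (E : TermLC Name → TermLC Name → Prop) :
    TermLC Name → TermLC Name → Prop where
  | ax : ∀ {t u : TermLC Name} (σ : ℕ → TermLC Name), E t u →
      DerivLC E (TermLC.subst σ t) (TermLC.subst σ u)
  | refl : ∀ t : TermLC Name, DerivLC E t t
  | symm : ∀ {t u : TermLC Name}, DerivLC E t u → DerivLC E u t
  | trans : ∀ {t u v : TermLC Name}, DerivLC E t u → DerivLC E u v → DerivLC E t v
  | pre : ∀ {t u : TermLC Name} (μ : Act Name), DerivLC E t u → DerivLC E (.pre μ t) (.pre μ u)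
  | plus : ∀ {t u t' u' : TermLC Name}, DerivLC E t u → DerivLC E t' u' →
      DerivLC E (.plus t t') (.plus u u')
  | par : ∀ {t u t' u' : TermLC Name}, DerivLC E t u → DerivLC E t' u' →
      DerivLC E (.par t t') (.par u u')
  | lmerge : ∀ {t u t' u' : TermLC Name}, DerivLC E t u → DerivLC E t' u' →
      DerivLC E (.lmerge t t') (.lmerge u u')
  | cmerge : ∀ {t u t' u' : TermLC Name}, DerivLC E t u → DerivLC E t' u' →
      DerivLC E (.cmerge t t') (.cmerge u u')

/-- Variable `x` used in the axioms. -/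
def vx {Name : Type} : TermLC Name := .var 0
/-- Variable `y` used in the axioms. -/
def vy {Name : Type} : TermLC Name := .var 1
/-- Variable `z` used in the axioms. -/
def vz {Name : Type} : TermLC Name := .var 2

/-- The axiom system `E_RBB` over CCS_LC. -/
inductive ERBB (Name : Type) : TermLC Name → TermLC Name → Prop where
  | A0 : ERBB Name (.plus vx .nil) vx
  | A1 : ERBB Name (.plus vx vy) (.plus vy vx)
  | A2 : ERBB Name (.plus (.plus vx vy) vz) (.plus vx (.plus vy vz))
  | A3 : ERBB Name (.plus vx vx) vx
  | L0 : ERBB Name (.lmerge .nil vx) .nil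
  | L1 : ∀ μ : Act Name, ERBB Name (.lmerge (.pre μ vx) vy) (.pre μ (.par vx vy))
  | L2 : ERBB Name (.lmerge (.lmerge vx vy) vz) (.lmerge vx (.par vy vz))
  | L3 : ERBB Name (.lmerge vx .nil) vx
  | L4 : ERBB Name (.lmerge (.plus vx vy) vz) (.plus (.lmerge vx vz) (.lmerge vy vz))
  | C0 : ERBB Name (.cmerge .nil vx) .nil
  | C1 : ERBB Name (.cmerge vx vy) (.cmerge vy vx)
  | C2 : ERBB Name (.cmerge (.cmerge vx vy) vz) (.cmerge vx (.cmerge vy vz))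
  | C3 : ERBB Name (.cmerge (.plus vx vy) vz) (.plus (.cmerge vx vz) (.cmerge vy vz))
  | C4 : ∀ α β : Obs Name, α = β.bar →
      ERBB Name (.cmerge (.pre (.obs α) vx) (.pre (.obs β) vy)) (.pre .tau (.par vx vy))
  | C5 : ∀ α β : Obs Name, α ≠ β.bar →
      ERBB Name (.cmerge (.pre (.obs α) vx) (.pre (.obs β) vy)) .nil
  | C6 : ERBB Name (.cmerge (.lmerge vx vy) vz) (.lmerge (.cmerge vx vz) vy)
  | C7 : ERBB Name (.cmerge (.cmerge vx vy) vz) .nil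
  | P : ERBB Name (.par vx vy)
      (.plus (.plus (.lmerge vx vy) (.lmerge vy vx)) (.cmerge vx vy))
  | TB : ∀ μ : Act Name,
      ERBB Name (.pre μ (.plus (.pre .tau (.plus vx vy)) vy)) (.pre μ (.plus vx vy))
  | TL : ERBB Name (.lmerge vx (.pre .tau vy)) (.lmerge vx vy)

/-!
Every axiom instance equates two processes whose initial transitions match exactly, with
residuals that are equal or branching bisimilar by the structural laws of `∥` (commutativity,
associativity, unit `0`) or by the τ-laws `τ.p ~BB p` and `τ.(p + q) + q ~BB p + q`. Soundness of
derivations then needs `~RBB` to be an equivalence and a congruence. The two substantial facts are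
transitivity of `~BB`, proved through semi-branching bisimilarity, which is transitive and
satisfies the stuttering property, and congruence of `~BB` for `∥`, which holds because a
communication consists of two observable steps, and observable steps are never absorbed.
-/

section
variable {Name : Type}

open ProcLC

theorem Obs.bar_bar (α : Obs Name) : α.bar.bar = α := by cases α <;> rfl

theorem Obs.bar_eq_iff {α β : Obs Name} : α.bar = β ↔ α = β.bar :=
  ⟨fun h => h ▸ (bar_bar α).symm, fun h => h ▸ bar_bar β⟩

@[simp] theorem not_transLC_nil {μ : Act Name} {r : ProcLC Name} : ¬ TransLC nil μ r := nofun

@[simp] theorem transLC_pre_iff {μ ν : Act Name} {p r : ProcLC Name} :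
    TransLC (pre ν p) μ r ↔ μ = ν ∧ r = p :=
  ⟨fun h => by cases h; exact ⟨rfl, rfl⟩, by rintro ⟨rfl, rfl⟩; exact .pre _ _⟩

@[simp] theorem transLC_plus_iff {μ : Act Name} {p q r : ProcLC Name} :
    TransLC (plus p q) μ r ↔ TransLC p μ r ∨ TransLC q μ r :=
  ⟨fun h => by cases h <;> simp_all, fun h => h.elim .plusL .plusR⟩

@[simp] theorem transLC_lmerge_iff {μ : Act Name} {p q r : ProcLC Name} :
    TransLC (lmerge p q) μ r ↔ ∃ p', TransLC p μ p' ∧ r = par p' q :=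
  ⟨fun h => by cases h; exact ⟨_, ‹_›, rfl⟩, by rintro ⟨p', h, rfl⟩; exact .lmerge q h⟩

@[simp] theorem transLC_cmerge_iff {μ : Act Name} {p q r : ProcLC Name} :
    TransLC (cmerge p q) μ r ↔ μ = .tau ∧
      ∃ α p' q', TransLC p (.obs α) p' ∧ TransLC q (.obs α.bar) q' ∧ r = par p' q' :=
  ⟨fun h => by cases h; exact ⟨rfl, _, _, _, ‹_›, ‹_›, rfl⟩,
    by rintro ⟨rfl, α, p', q', hp, hq, rfl⟩; exact .cmerge hp hq⟩

theorem EpsLC.par_left {p p' : ProcLC Name} (q : ProcLC Name) (h : EpsLC p p') :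
    EpsLC (par p q) (par p' q) :=
  Relation.ReflTransGen.lift (par · q) (fun _ _ => .parL) _ _ h

theorem EpsLC.par_right (p : ProcLC Name) {q q' : ProcLC Name} (h : EpsLC q q') :
    EpsLC (par p q) (par p q') :=
  Relation.ReflTransGen.lift (par p ·) (fun _ _ => .parR) _ _ h

def StrongTransfer (R : ProcLC Name → ProcLC Name → Prop) (p q : ProcLC Name) : Prop :=
  ∀ μ p', TransLC p μ p' → ∃ q', TransLC q μ q' ∧ R p' q'

/-- The transfer clause of `IsBBLC`. -/
def BranchingTransfer (R : ProcLC Name → ProcLC Name → Prop) (p q : ProcLC Name) : Prop :=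
  ∀ μ p', TransLC p μ p' →
    (μ = .tau ∧ R p' q) ∨ ∃ q'' q', EpsLC q q'' ∧ TransLC q'' μ q' ∧ R p q'' ∧ R p' q'

def SemiBranchingTransfer (R : ProcLC Name → ProcLC Name → Prop) (p q : ProcLC Name) : Prop :=
  ∀ μ p', TransLC p μ p' → ∃ q'', EpsLC q q'' ∧ R p q'' ∧
    ((μ = .tau ∧ R p' q'') ∨ ∃ q', TransLC q'' μ q' ∧ R p' q')

section Transfer
variable {R S : ProcLC Name → ProcLC Name → Prop} {p q : ProcLC Name}

theorem StrongTransfer.mono (h : StrongTransfer R p q) (hRS : ∀ x y, R x y → S x y) :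
    StrongTransfer S p q :=
  fun μ p' hp => (h μ p' hp).imp fun _ ⟨hq, hR⟩ => ⟨hq, hRS _ _ hR⟩

theorem StrongTransfer.branching (h : StrongTransfer R p q) (hpq : R p q) :
    BranchingTransfer R p q :=
  fun μ p' hp => have ⟨q', hq, hR⟩ := h μ p' hp; .inr ⟨q, q', .refl, hq, hpq, hR⟩

theorem BranchingTransfer.mono (h : BranchingTransfer R p q) (hRS : ∀ x y, R x y → S x y) :
    BranchingTransfer S p q := by
  intro μ p' hp
  rcases h μ p' hp with ⟨hμ, hR⟩ | ⟨q'', q', he, hq, hR, hR'⟩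
  · exact .inl ⟨hμ, hRS _ _ hR⟩
  · exact .inr ⟨q'', q', he, hq, hRS _ _ hR, hRS _ _ hR'⟩

theorem BranchingTransfer.semiBranching (h : BranchingTransfer R p q) (hpq : R p q) :
    SemiBranchingTransfer R p q := by
  intro μ p' hp
  rcases h μ p' hp with ⟨hμ, hR⟩ | ⟨q'', q', he, hq, hR, hR'⟩
  · exact ⟨q, .refl, hpq, .inl ⟨hμ, hR⟩⟩
  · exact ⟨q'', he, hR, .inr ⟨q', hq, hR'⟩⟩

theorem SemiBranchingTransfer.mono (h : SemiBranchingTransfer R p q)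
    (hRS : ∀ x y, R x y → S x y) : SemiBranchingTransfer S p q := by
  intro μ p' hp
  obtain ⟨q'', he, hR, hR' | ⟨q', hq, hR'⟩⟩ := h μ p' hp
  · exact ⟨q'', he, hRS _ _ hR, .inl ⟨hR'.1, hRS _ _ hR'.2⟩⟩
  · exact ⟨q'', he, hRS _ _ hR, .inr ⟨q', hq, hRS _ _ hR'⟩⟩

end Transfer

namespace BBLC

variable {p q r : ProcLC Name}

theorem symm (h : BBLC p q) : BBLC q p :=
  have ⟨R, hR, hpq⟩ := h; ⟨R, hR, hR.1 hpq⟩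

theorem transfer (h : BBLC p q) : BranchingTransfer BBLC p q :=
  have ⟨R, hR, hpq⟩ := h
  BranchingTransfer.mono (R := R) (hR.2 p q hpq) fun _ _ hxy => ⟨R, hR, hxy⟩

def upTo (R : ProcLC Name → ProcLC Name → Prop) (x y : ProcLC Name) : Prop :=
  BBLC x y ∨ R x y ∨ R y x

theorem of_transfer {R : ProcLC Name → ProcLC Name → Prop}
    (h : ∀ x y, R x y → BranchingTransfer (upTo R) x y ∧ BranchingTransfer (upTo R) y x)
    (hpq : R p q) : BBLC p q := by
  refine ⟨upTo R, ⟨?_, ?_⟩, .inr (.inl hpq)⟩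
  · rintro x y (hxy | hxy | hxy)
    exacts [.inl hxy.symm, .inr (.inr hxy), .inr (.inl hxy)]
  · rintro x y (hxy | hxy | hxy)
    exacts [hxy.transfer.mono fun _ _ => .inl, (h x y hxy).1, (h y x hxy).2]

theorem of_strongTransfer {R : ProcLC Name → ProcLC Name → Prop}
    (h : ∀ x y, R x y → StrongTransfer R x y ∧ StrongTransfer (flip R) y x)
    (hpq : R p q) : BBLC p q := by
  refine of_transfer (fun x y hxy => ⟨?_, ?_⟩) hpq
  · exact ((h x y hxy).1.mono fun _ _ => (.inr <| .inl ·)).branching (.inr (.inl hxy))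
  · exact ((h x y hxy).2.mono fun _ _ => (.inr <| .inr ·)).branching (.inr (.inr hxy))

theorem refl (p : ProcLC Name) : BBLC p p :=
  of_strongTransfer (R := Eq) (fun _ _ h => h ▸ ⟨fun _ p' hp => ⟨p', hp, rfl⟩,
    fun _ p' hp => ⟨p', hp, rfl⟩⟩) rfl

end BBLC

-- The semi-branching variant of `BBLC`: it is easily seen to be transitive, and
-- `BBLC.of_semiBB` shows that it is no coarser than `BBLC`.
def SemiBB (p q : ProcLC Name) : Prop :=
  ∃ R : ProcLC Name → ProcLC Name → Prop,
    (∀ x y, R x y → R y x) ∧ (∀ x y, R x y → SemiBranchingTransfer R x y) ∧ R p q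

namespace SemiBB

variable {p q r : ProcLC Name}

theorem symm (h : SemiBB p q) : SemiBB q p :=
  have ⟨R, hsymm, htr, hpq⟩ := h; ⟨R, hsymm, htr, hsymm _ _ hpq⟩

theorem transfer (h : SemiBB p q) : SemiBranchingTransfer SemiBB p q :=
  have ⟨R, hsymm, htr, hpq⟩ := h
  (htr p q hpq).mono fun _ _ hxy => ⟨R, hsymm, htr, hxy⟩

theorem of_bb (h : BBLC p q) : SemiBB p q :=
  ⟨BBLC, fun _ _ => BBLC.symm, fun _ _ hxy => hxy.transfer.semiBranching hxy, h⟩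

theorem transfer_of_eps {q' : ProcLC Name} (h : SemiBB p q') (he : EpsLC q q') :
    SemiBranchingTransfer SemiBB p q := fun μ p' hp =>
  have ⟨q'', he', hrest⟩ := h.transfer μ p' hp; ⟨q'', he.trans he', hrest⟩

theorem eps {p' : ProcLC Name} (h : SemiBB p q) (he : EpsLC p p') :
    ∃ q', EpsLC q q' ∧ SemiBB p' q' := by
  induction he with
  | refl => exact ⟨q, .refl, h⟩
  | tail _ hstep ih =>
    obtain ⟨q₁, he₁, h₁⟩ := ih
    obtain ⟨q₂, he₂, -, ⟨-, h₂⟩ | ⟨q₃, hq₃, h₃⟩⟩ := h₁.transfer _ _ hstep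
    · exact ⟨q₂, he₁.trans he₂, h₂⟩
    · exact ⟨q₃, (he₁.trans he₂).tail hq₃, h₃⟩

theorem trans (h₁ : SemiBB p q) (h₂ : SemiBB q r) : SemiBB p r := by
  refine ⟨fun x z => ∃ y, SemiBB x y ∧ SemiBB y z, ?_, ?_, q, h₁, h₂⟩
  · rintro x z ⟨y, hxy, hyz⟩
    exact ⟨y, hyz.symm, hxy.symm⟩
  · rintro x z ⟨y, hxy, hyz⟩ μ x' hx
    obtain ⟨y'', hey, hxy'', hrest⟩ := hxy.transfer μ x' hx
    obtain ⟨z₁, hez₁, hy''z₁⟩ := hyz.eps hey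
    rcases hrest with ⟨hμ, hx'y''⟩ | ⟨y', hy', hx'y'⟩
    · exact ⟨z₁, hez₁, ⟨y'', hxy'', hy''z₁⟩, .inl ⟨hμ, y'', hx'y'', hy''z₁⟩⟩
    obtain ⟨z₂, hez₂, hy''z₂, ⟨hμ, hy'z₂⟩ | ⟨z', hz', hy'z'⟩⟩ := hy''z₁.transfer μ y' hy'
    · exact ⟨z₂, hez₁.trans hez₂, ⟨y'', hxy'', hy''z₂⟩, .inl ⟨hμ, y', hx'y', hy'z₂⟩⟩
    · exact ⟨z₂, hez₁.trans hez₂, ⟨y'', hxy'', hy''z₂⟩, .inr ⟨z', hz', y', hx'y', hy'z'⟩⟩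

/-- The stuttering property. -/
theorem of_eps_between {u v : ProcLC Name} (hu : SemiBB p u) (hv : SemiBB p v)
    (huq : EpsLC u q) (hqv : EpsLC q v) : SemiBB p q := by
  let T (x y : ProcLC Name) := ∃ u v, SemiBB x u ∧ SemiBB x v ∧ EpsLC u y ∧ EpsLC y v
  have hT : ∀ {x y}, SemiBB x y → T x y := fun h => ⟨_, _, h, h, .refl, .refl⟩
  refine ⟨fun x y => T x y ∨ T y x, fun x y => Or.symm, ?_, .inl ⟨u, v, hu, hv, huq, hqv⟩⟩
  rintro x y (⟨u, v, -, hxv, -, hyv⟩ | ⟨u, v, huy, -, hux, -⟩)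
  · exact (hxv.transfer_of_eps hyv).mono fun _ _ h => .inl (hT h)
  · obtain ⟨y₁, hyy₁, hxy₁⟩ := huy.symm.eps hux
    exact (hxy₁.transfer_of_eps hyy₁).mono fun _ _ h => .inl (hT h)

end SemiBB

namespace BBLC

variable {p q r : ProcLC Name}

theorem of_semiBB (h : SemiBB p q) : BBLC p q := by
  refine ⟨SemiBB, ⟨fun _ _ => SemiBB.symm, ?_⟩, h⟩
  intro x y hxy μ x' hx
  obtain ⟨y'', hey, hxy'', ⟨rfl, hx'y''⟩ | ⟨y', hy', hx'y'⟩⟩ := hxy.transfer μ x' hx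
  · rcases Relation.ReflTransGen.cases_tail hey with rfl | ⟨w, hyw, hwy''⟩
    · exact .inl ⟨rfl, hx'y''⟩
    · exact .inr ⟨w, y'', hyw, hwy'', hxy.of_eps_between hxy'' hyw (.single hwy''), hx'y''⟩
  · exact .inr ⟨y'', y', hey, hy', hxy'', hx'y'⟩

theorem trans (h₁ : BBLC p q) (h₂ : BBLC q r) : BBLC p r :=
  of_semiBB ((SemiBB.of_bb h₁).trans (.of_bb h₂))

end BBLC

namespace BBLC

variable {a b c d : ProcLC Name}

theorem par (h₁ : BBLC a b) (h₂ : BBLC c d) : BBLC (.par a c) (.par b d) := by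
  let R (x y : ProcLC Name) := ∃ a b c d, x = ProcLC.par a c ∧ y = ProcLC.par b d ∧ BBLC a b ∧ BBLC c d
  refine ⟨R, ⟨?_, ?_⟩, a, b, c, d, rfl, rfl, h₁, h₂⟩
  · rintro x y ⟨a, b, c, d, rfl, rfl, h₁, h₂⟩
    exact ⟨b, a, d, c, rfl, rfl, h₁.symm, h₂.symm⟩
  rintro x y ⟨a, b, c, d, rfl, rfl, h₁, h₂⟩ μ x' hx
  cases hx with
  | parL h =>
    rcases h₁.transfer _ _ h with ⟨rfl, h'⟩ | ⟨b'', b', he, hb, hb'', hb'⟩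
    · exact .inl ⟨rfl, _, _, _, _, rfl, rfl, h', h₂⟩
    · exact .inr ⟨_, _, he.par_left d, .parL hb,
        ⟨_, _, _, _, rfl, rfl, hb'', h₂⟩, ⟨_, _, _, _, rfl, rfl, hb', h₂⟩⟩
  | parR h =>
    rcases h₂.transfer _ _ h with ⟨rfl, h'⟩ | ⟨d'', d', he, hd, hd'', hd'⟩
    · exact .inl ⟨rfl, _, _, _, _, rfl, rfl, h₁, h'⟩
    · exact .inr ⟨_, _, he.par_right b, .parR hd,
        ⟨_, _, _, _, rfl, rfl, h₁, hd''⟩, ⟨_, _, _, _, rfl, rfl, h₁, hd'⟩⟩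
  | comm ha hc =>
    obtain ⟨b'', b', heb, hb, hb'', hb'⟩ :=
      (h₁.transfer _ _ ha).resolve_left fun h => nomatch h.1
    obtain ⟨d'', d', hed, hd, hd'', hd'⟩ :=
      (h₂.transfer _ _ hc).resolve_left fun h => nomatch h.1
    exact .inr ⟨_, _, (heb.par_left d).trans (hed.par_right b''), .comm hb hd,
      ⟨_, _, _, _, rfl, rfl, hb'', hd''⟩, ⟨_, _, _, _, rfl, rfl, hb', hd'⟩⟩

theorem par_comm (a b : ProcLC Name) : BBLC (.par a b) (.par b a) := by
  let R (x y : ProcLC Name) := ∃ a b : ProcLC Name, x = .par a b ∧ y = .par b a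
  have hR : ∀ a b, StrongTransfer R (.par a b) (.par b a) := by
    intro a b μ x hx
    cases hx with
    | parL h => exact ⟨_, .parR h, _, _, rfl, rfl⟩
    | parR h => exact ⟨_, .parL h, _, _, rfl, rfl⟩
    | comm ha hb => exact ⟨_, .comm hb ((Obs.bar_bar _).symm ▸ ha), _, _, rfl, rfl⟩
  refine of_strongTransfer (R := R) ?_ ⟨a, b, rfl, rfl⟩
  rintro x y ⟨a, b, rfl, rfl⟩
  exact ⟨hR a b, (hR b a).mono fun _ _ ⟨a, b, hx, hy⟩ => ⟨b, a, hy, hx⟩⟩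

theorem par_assoc (a b c : ProcLC Name) :
    BBLC (.par (.par a b) c) (.par a (.par b c)) := by
  let R (x y : ProcLC Name) := ∃ a b c : ProcLC Name, x = .par (.par a b) c ∧ y = .par a (.par b c)
  refine of_strongTransfer (R := R) ?_ ⟨a, b, c, rfl, rfl⟩
  rintro x y ⟨a, b, c, rfl, rfl⟩
  constructor
  · intro μ x hx
    cases hx with
    | parL h =>
      cases h with
      | parL h => exact ⟨_, .parL h, _, _, _, rfl, rfl⟩
      | parR h => exact ⟨_, .parR (.parL h), _, _, _, rfl, rfl⟩
      | comm ha hb => exact ⟨_, .comm ha (.parL hb), _, _, _, rfl, rfl⟩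
    | parR h => exact ⟨_, .parR (.parR h), _, _, _, rfl, rfl⟩
    | comm h hc =>
      cases h with
      | parL ha => exact ⟨_, .comm ha (.parR hc), _, _, _, rfl, rfl⟩
      | parR hb => exact ⟨_, .parR (.comm hb hc), _, _, _, rfl, rfl⟩
  · intro μ x hx
    cases hx with
    | parL h => exact ⟨_, .parL (.parL h), _, _, _, rfl, rfl⟩
    | parR h =>
      cases h with
      | parL h => exact ⟨_, .parL (.parR h), _, _, _, rfl, rfl⟩
      | parR h => exact ⟨_, .parR h, _, _, _, rfl, rfl⟩
      | comm hb hc => exact ⟨_, .comm (.parR hb) hc, _, _, _, rfl, rfl⟩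
    | comm ha h =>
      cases h with
      | parL hb => exact ⟨_, .parL (.comm ha hb), _, _, _, rfl, rfl⟩
      | parR hc => exact ⟨_, .comm (.parL ha) hc, _, _, _, rfl, rfl⟩

theorem par_nil (a : ProcLC Name) : BBLC (.par a .nil) a := by
  let R (x y : ProcLC Name) := x = .par y .nil
  refine of_strongTransfer (R := R) ?_ rfl
  rintro x y rfl
  constructor
  · intro μ x hx
    cases hx with
    | parL h => exact ⟨_, h, rfl⟩
    | parR h => cases h
    | comm _ h => cases h
  · exact fun μ y' hy => ⟨_, .parL hy, rfl⟩

theorem par_right_comm (a b c : ProcLC Name) :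
    BBLC (.par (.par a b) c) (.par (.par a c) b) :=
  (par_assoc a b c).trans <| ((refl a).par (par_comm b c)).trans (par_assoc a c b).symm

theorem tau_pre (a : ProcLC Name) : BBLC (.pre .tau a) a := by
  refine of_transfer (R := fun x y => x = .pre .tau y) ?_ rfl
  rintro x y rfl
  constructor
  · intro μ x hx
    obtain ⟨rfl, rfl⟩ := transLC_pre_iff.1 hx
    exact .inl ⟨rfl, .inl (refl _)⟩
  · exact fun μ y' hy => .inr ⟨y, y', .single (.pre _ _), hy, .inl (refl _), .inl (refl _)⟩

theorem tau_plus_absorb (a b : ProcLC Name) :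
    BBLC (.plus (.pre .tau (.plus a b)) b) (.plus a b) := by
  refine of_transfer (R := fun x y => x = .plus (.pre .tau (.plus a b)) b ∧ y = .plus a b) ?_
    ⟨rfl, rfl⟩
  rintro x y ⟨rfl, rfl⟩
  constructor
  · intro μ x hx
    rcases transLC_plus_iff.1 hx with hx | hx
    · obtain ⟨rfl, rfl⟩ := transLC_pre_iff.1 hx
      exact .inl ⟨rfl, .inl (refl _)⟩
    · exact .inr ⟨_, x, .refl, .plusR hx, .inr (.inl ⟨rfl, rfl⟩), .inl (refl _)⟩
  · exact fun μ y' hy =>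
      .inr ⟨_, y', .single (.plusL (.pre _ _)), hy, .inl (refl _), .inl (refl _)⟩

end BBLC

namespace RBBLC

variable {p q r s : ProcLC Name}

theorem of_transfer (h : StrongTransfer BBLC p q) (h' : StrongTransfer BBLC q p) : RBBLC p q :=
  ⟨h, fun μ q' hq => (h' μ q' hq).imp fun _ ⟨hp, hb⟩ => ⟨hp, hb.symm⟩⟩

theorem transfer (h : RBBLC p q) : StrongTransfer BBLC p q := h.1

theorem symm (h : RBBLC p q) : RBBLC q p :=
  of_transfer (fun μ q' hq => (h.2 μ q' hq).imp fun _ ⟨hp, hb⟩ => ⟨hp, hb.symm⟩) h.1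

theorem of_transLC_iff (h : ∀ μ r, TransLC p μ r ↔ TransLC q μ r) : RBBLC p q :=
  of_transfer (fun μ r hr => ⟨r, (h μ r).1 hr, .refl r⟩)
    (fun μ r hr => ⟨r, (h μ r).2 hr, .refl r⟩)

theorem refl (p : ProcLC Name) : RBBLC p p :=
  of_transLC_iff fun _ _ => .rfl

theorem trans (h₁ : RBBLC p q) (h₂ : RBBLC q r) : RBBLC p r := by
  suffices ∀ {p q r : ProcLC Name}, RBBLC p q → RBBLC q r → StrongTransfer BBLC p r from
    of_transfer (this h₁ h₂) (this h₂.symm h₁.symm)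
  intro p q r h₁ h₂ μ p' hp
  obtain ⟨q', hq, hb₁⟩ := h₁.transfer μ p' hp
  obtain ⟨r', hr, hb₂⟩ := h₂.transfer μ q' hq
  exact ⟨r', hr, hb₁.trans hb₂⟩

theorem bb (h : RBBLC p q) : BBLC p q := by
  refine BBLC.of_transfer (R := fun x y => x = p ∧ y = q) ?_ ⟨rfl, rfl⟩
  rintro x y ⟨rfl, rfl⟩
  exact ⟨(h.transfer.mono fun _ _ => .inl).branching (.inr (.inl ⟨rfl, rfl⟩)),
    (h.symm.transfer.mono fun _ _ => .inl).branching (.inr (.inr ⟨rfl, rfl⟩))⟩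

theorem pre (μ : Act Name) (h : BBLC p q) : RBBLC (.pre μ p) (.pre μ q) := by
  refine of_transfer ?_ ?_ <;> intro ν x hx <;> obtain ⟨rfl, rfl⟩ := transLC_pre_iff.1 hx
  exacts [⟨q, .pre _ q, h⟩, ⟨p, .pre _ p, h.symm⟩]

theorem plus (h₁ : RBBLC p q) (h₂ : RBBLC r s) : RBBLC (.plus p r) (.plus q s) := by
  suffices ∀ {p q r s : ProcLC Name}, RBBLC p q → RBBLC r s →
      StrongTransfer BBLC (.plus p r) (.plus q s) from
    of_transfer (this h₁ h₂) (this h₁.symm h₂.symm)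
  intro p q r s h₁ h₂ μ x hx
  rcases transLC_plus_iff.1 hx with h | h
  · obtain ⟨q', hq, hb⟩ := h₁.transfer μ _ h
    exact ⟨q', .plusL hq, hb⟩
  · obtain ⟨s', hs, hb⟩ := h₂.transfer μ _ h
    exact ⟨s', .plusR hs, hb⟩

theorem par (h₁ : RBBLC p q) (h₂ : RBBLC r s) : RBBLC (.par p r) (.par q s) := by
  suffices ∀ {p q r s : ProcLC Name}, RBBLC p q → RBBLC r s →
      StrongTransfer BBLC (.par p r) (.par q s) from
    of_transfer (this h₁ h₂) (this h₁.symm h₂.symm)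
  intro p q r s h₁ h₂ μ x hx
  cases hx with
  | parL h =>
    obtain ⟨q', hq, hb⟩ := h₁.transfer μ _ h
    exact ⟨_, .parL hq, hb.par h₂.bb⟩
  | parR h =>
    obtain ⟨s', hs, hb⟩ := h₂.transfer μ _ h
    exact ⟨_, .parR hs, h₁.bb.par hb⟩
  | comm hp hr =>
    obtain ⟨q', hq, hbq⟩ := h₁.transfer _ _ hp
    obtain ⟨s', hs, hbs⟩ := h₂.transfer _ _ hr
    exact ⟨_, .comm hq hs, hbq.par hbs⟩

theorem lmerge (h₁ : RBBLC p q) (h₂ : RBBLC r s) : RBBLC (.lmerge p r) (.lmerge q s) := by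
  suffices ∀ {p q r s : ProcLC Name}, RBBLC p q → RBBLC r s →
      StrongTransfer BBLC (.lmerge p r) (.lmerge q s) from
    of_transfer (this h₁ h₂) (this h₁.symm h₂.symm)
  intro p q r s h₁ h₂ μ x hx
  obtain ⟨p', hp, rfl⟩ := transLC_lmerge_iff.1 hx
  obtain ⟨q', hq, hb⟩ := h₁.transfer μ _ hp
  exact ⟨_, .lmerge s hq, hb.par h₂.bb⟩

theorem cmerge (h₁ : RBBLC p q) (h₂ : RBBLC r s) : RBBLC (.cmerge p r) (.cmerge q s) := by
  suffices ∀ {p q r s : ProcLC Name}, RBBLC p q → RBBLC r s →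
      StrongTransfer BBLC (.cmerge p r) (.cmerge q s) from
    of_transfer (this h₁ h₂) (this h₁.symm h₂.symm)
  intro p q r s h₁ h₂ μ x hx
  obtain ⟨rfl, α, p', r', hp, hr, rfl⟩ := transLC_cmerge_iff.1 hx
  obtain ⟨q', hq, hbq⟩ := h₁.transfer _ _ hp
  obtain ⟨s', hs, hbs⟩ := h₂.transfer _ _ hr
  exact ⟨_, .cmerge hq hs, hbq.par hbs⟩

end RBBLC

namespace RBBLC

theorem lmerge_lmerge (a b c : ProcLC Name) :
    RBBLC (.lmerge (.lmerge a b) c) (.lmerge a (.par b c)) := by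
  refine of_transfer (fun μ x hx => ?_) (fun μ x hx => ?_)
  · obtain ⟨_, ⟨a', ha, rfl⟩, rfl⟩ := by simpa only [transLC_lmerge_iff] using hx
    exact ⟨_, .lmerge _ ha, .par_assoc a' b c⟩
  · obtain ⟨a', ha, rfl⟩ := transLC_lmerge_iff.1 hx
    exact ⟨_, .lmerge _ (.lmerge _ ha), (BBLC.par_assoc a' b c).symm⟩

theorem lmerge_nil (a : ProcLC Name) : RBBLC (.lmerge a .nil) a := by
  refine of_transfer (fun μ x hx => ?_) (fun μ x hx => ?_)
  · obtain ⟨a', ha, rfl⟩ := transLC_lmerge_iff.1 hx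
    exact ⟨a', ha, .par_nil a'⟩
  · exact ⟨_, .lmerge _ hx, (BBLC.par_nil x).symm⟩

theorem lmerge_tau_pre (a b : ProcLC Name) : RBBLC (.lmerge a (.pre .tau b)) (.lmerge a b) := by
  refine of_transfer (fun μ x hx => ?_) (fun μ x hx => ?_) <;>
    obtain ⟨a', ha, rfl⟩ := transLC_lmerge_iff.1 hx
  · exact ⟨_, .lmerge _ ha, (BBLC.refl a').par (.tau_pre b)⟩
  · exact ⟨_, .lmerge _ ha, (BBLC.refl a').par (BBLC.tau_pre b).symm⟩

theorem cmerge_comm (a b : ProcLC Name) : RBBLC (.cmerge a b) (.cmerge b a) := by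
  suffices ∀ a b : ProcLC Name, StrongTransfer BBLC (.cmerge a b) (.cmerge b a) from
    of_transfer (this a b) (this b a)
  intro a b μ x hx
  obtain ⟨rfl, α, a', b', ha, hb, rfl⟩ := transLC_cmerge_iff.1 hx
  exact ⟨_, .cmerge hb ((Obs.bar_bar α).symm ▸ ha), .par_comm a' b'⟩

theorem cmerge_lmerge (a b c : ProcLC Name) :
    RBBLC (.cmerge (.lmerge a b) c) (.lmerge (.cmerge a c) b) := by
  refine of_transfer (fun μ x hx => ?_) (fun μ x hx => ?_)
  · obtain ⟨rfl, α, _, c', ⟨a', ha, rfl⟩, hc, rfl⟩ := by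
      simpa only [transLC_cmerge_iff, transLC_lmerge_iff] using hx
    exact ⟨_, .lmerge _ (.cmerge ha hc), .par_right_comm a' b c'⟩
  · obtain ⟨_, ⟨rfl, α, a', c', ha, hc, rfl⟩, rfl⟩ := by
      simpa only [transLC_cmerge_iff, transLC_lmerge_iff] using hx
    exact ⟨_, .cmerge (.lmerge _ ha) hc, (BBLC.par_right_comm a' b c').symm⟩

theorem par_expand (a b : ProcLC Name) :
    RBBLC (.par a b) (.plus (.plus (.lmerge a b) (.lmerge b a)) (.cmerge a b)) := by
  refine of_transfer (fun μ x hx => ?_) (fun μ x hx => ?_)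
  · cases hx with
    | parL ha => exact ⟨_, .plusL (.plusL (.lmerge _ ha)), .refl _⟩
    | parR hb => exact ⟨_, .plusL (.plusR (.lmerge _ hb)), .par_comm _ _⟩
    | comm ha hb => exact ⟨_, .plusR (.cmerge ha hb), .refl _⟩
  · simp only [transLC_plus_iff, transLC_lmerge_iff, transLC_cmerge_iff] at hx
    obtain (⟨a', ha, rfl⟩ | ⟨b', hb, rfl⟩) | ⟨rfl, α, a', b', ha, hb, rfl⟩ := hx
    · exact ⟨_, .parL ha, .refl _⟩
    · exact ⟨_, .parR hb, .par_comm _ _⟩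
    · exact ⟨_, .comm ha hb, .refl _⟩

end RBBLC

theorem TermLC.substP_subst (σ : ℕ → ProcLC Name) (τ : ℕ → TermLC Name) (t : TermLC Name) :
    (t.subst τ).substP σ = t.substP fun n => (τ n).substP σ := by
  induction t <;> simp only [TermLC.subst, TermLC.substP, *]

theorem ERBB.sound {t u : TermLC Name} (h : ERBB Name t u) (σ : ℕ → ProcLC Name) :
    RBBLC (t.substP σ) (u.substP σ) := by
  cases h <;> simp only [TermLC.substP, vx, vy, vz]
  case L2 => exact .lmerge_lmerge _ _ _
  case L3 => exact .lmerge_nil _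
  case C1 => exact .cmerge_comm _ _
  case C6 => exact .cmerge_lmerge _ _ _
  case P => exact .par_expand _ _
  case TB => exact .pre _ (.tau_plus_absorb _ _)
  case TL => exact .lmerge_tau_pre _ _
  -- the remaining axioms equate processes with exactly the same transitions
  all_goals
    refine .of_transLC_iff fun μ r => ?_
    simp [Obs.bar_eq_iff, or_comm, or_assoc, or_and_right, and_or_left, exists_or, *]

theorem DerivLC.sound_ERBB {t u : TermLC Name} (h : DerivLC (ERBB Name) t u)
    (σ : ℕ → ProcLC Name) : RBBLC (t.substP σ) (u.substP σ) := by
  induction h generalizing σ with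
  | ax τ hE => simpa only [TermLC.substP_subst] using hE.sound _
  | refl t => exact .refl _
  | symm _ ih => exact (ih σ).symm
  | trans _ _ ih₁ ih₂ => exact (ih₁ σ).trans (ih₂ σ)
  | pre μ _ ih => exact .pre μ (ih σ).bb
  | plus _ _ ih₁ ih₂ => exact (ih₁ σ).plus (ih₂ σ)
  | par _ _ ih₁ ih₂ => exact (ih₁ σ).par (ih₂ σ)
  | lmerge _ _ ih₁ ih₂ => exact (ih₁ σ).lmerge (ih₂ σ)
  | cmerge _ _ ih₁ ih₂ => exact (ih₁ σ).cmerge (ih₂ σ)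

end

theorem ERBB_sound_general {Name : Type} :
    (∀ t u : TermLC Name, ERBB Name t u →
      ∀ σ : ℕ → ProcLC Name, RBBLC (TermLC.substP σ t) (TermLC.substP σ u)) ∧
    (∀ t u : TermLC Name, DerivLC (ERBB Name) t u →
      ∀ σ : ℕ → ProcLC Name, RBBLC (TermLC.substP σ t) (TermLC.substP σ u)) :=
  ⟨fun _ _ => ERBB.sound, fun _ _ => DerivLC.sound_ERBB⟩

/-- `E_RBB` is sound modulo rooted branching bisimilarity over
CCS_LC, and consequently every derivable equation is sound. -/
theorem ERBB_sound {Name : Type} [Nonempty Name] :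
    (∀ t u : TermLC Name, ERBB Name t u →
      ∀ σ : ℕ → ProcLC Name, RBBLC (TermLC.substP σ t) (TermLC.substP σ u)) ∧
    (∀ t u : TermLC Name, DerivLC (ERBB Name) t u →
      ∀ σ : ℕ → ProcLC Name, RBBLC (TermLC.substP σ t) (TermLC.substP σ u)) :=
  ERBB_sound_general
end

section
/- Let t be a CCS term, σ a closed substitution, and p a process. If σ(t) →τ p, then one of the following holds: (1) there is a term t' such that t →τ t' and σ(t') = p; (2) there are a variable x, a process q, and a configuration c such that σ(x) →τ q, t →^{(x)}_τ c, and σ[x_τ ↦ q](c) = p; (3) there are a variable x, a process q, a configuration c and α ∈ A∪Ā such that σ(x) →α q, t →^{(x)}_{α,τ} c, and σ[x_α ↦ q](c) = p; (4) there are variables x, y, processes q_x, q_y, a configuration c and α ∈ A∪Ā such that σ(x) →α q_x, σ(y) →ᾱ q_y, t →^{(x,y)}_τ c, and σ[x_α ↦ q_x, y_ᾱ ↦ q_y](c) = p. -/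
/-- CCS processes (closed terms): 0, prefixing, choice, parallel composition. -/
inductive Proc (Name : Type) : Type where
  | nil : Proc Name
  | pre : Act Name → Proc Name → Proc Name
  | plus : Proc Name → Proc Name → Proc Name
  | par : Proc Name → Proc Name → Proc Name
  deriving DecidableEq

/-- SOS transition relation for CCS processes. -/
inductive PTrans {Name : Type} : Proc Name → Act Name → Proc Name → Prop where
  | pre : ∀ (μ : Act Name) (p : Proc Name), PTrans (.pre μ p) μ p
  | plusL : ∀ {p p' q : Proc Name} {μ : Act Name}, PTrans p μ p' → PTrans (.plus p q) μ p'
  | plusR : ∀ {p q q' : Proc Name} {μ : Act Name}, PTrans q μ q' → PTrans (.plus p q) μ q'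
  | parL : ∀ {p p' q : Proc Name} {μ : Act Name}, PTrans p μ p' → PTrans (.par p q) μ (.par p' q)
  | parR : ∀ {p q q' : Proc Name} {μ : Act Name}, PTrans q μ q' → PTrans (.par p q) μ (.par p q')
  | comm : ∀ {p p' q q' : Proc Name} {α : Obs Name},
      PTrans p (.obs α) p' → PTrans q (.obs α.bar) q' → PTrans (.par p q) .tau (.par p' q')

/-- `→ε`: the reflexive-transitive closure of `→τ`. -/
def EpsTrans {Name : Type} : Proc Name → Proc Name → Prop :=
  Relation.ReflTransGen (fun p q => PTrans p Act.tau q)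

/-- `R` is a branching bisimulation. -/
def IsBranchingBisim {Name : Type} (R : Proc Name → Proc Name → Prop) : Prop :=
  Symmetric R ∧
  ∀ p q, R p q → ∀ μ p', PTrans p μ p' →
    (μ = Act.tau ∧ R p' q) ∨
    ∃ q'' q', EpsTrans q q'' ∧ PTrans q'' μ q' ∧ R p q'' ∧ R p' q'

/-- Branching bisimilarity `~BB` (the largest branching bisimulation). -/
def BB {Name : Type} (p q : Proc Name) : Prop :=
  ∃ R : Proc Name → Proc Name → Prop, IsBranchingBisim R ∧ R p q

/-- Rooted branching bisimilarity `~RBB`. -/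
def RBB {Name : Type} (p q : Proc Name) : Prop :=
  (∀ (μ : Act Name) (p' : Proc Name), PTrans p μ p' → ∃ q', PTrans q μ q' ∧ BB p' q') ∧
  (∀ (μ : Act Name) (q' : Proc Name), PTrans q μ q' → ∃ p', PTrans p μ p' ∧ BB p' q')

/-- Open CCS terms: 0, variables, prefixing, choice, parallel composition. -/
inductive Term (Name : Type) : Type where
  | nil : Term Name
  | var : ℕ → Term Name
  | pre : Act Name → Term Name → Term Name
  | plus : Term Name → Term Name → Term Name
  | par : Term Name → Term Name → Term Name
  deriving DecidableEq

/-- Applying a substitution (of terms for variables) to a term. -/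
def Term.subst {Name : Type} (σ : ℕ → Term Name) : Term Name → Term Name
  | .nil => .nil
  | .var x => σ x
  | .pre μ t => .pre μ (Term.subst σ t)
  | .plus t u => .plus (Term.subst σ t) (Term.subst σ u)
  | .par t u => .par (Term.subst σ t) (Term.subst σ u)

/-- Applying a closed substitution (of processes for variables) to a term. -/
def Term.substP {Name : Type} (σ : ℕ → Proc Name) : Term Name → Proc Name
  | .nil => .nil
  | .var x => σ x
  | .pre μ t => .pre μ (Term.substP σ t)
  | .plus t u => .plus (Term.substP σ t) (Term.substP σ u)
  | .par t u => .par (Term.substP σ t) (Term.substP σ u)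

/-- Every process is a (closed) term. -/
def Proc.toTerm {Name : Type} : Proc Name → Term Name
  | .nil => .nil
  | .pre μ p => .pre μ (Proc.toTerm p)
  | .plus p q => .plus (Proc.toTerm p) (Proc.toTerm q)
  | .par p q => .par (Proc.toTerm p) (Proc.toTerm q)

/-- SOS transition relation on open CCS terms (variables afford no transitions). -/
inductive TTrans {Name : Type} : Term Name → Act Name → Term Name → Prop where
  | pre : ∀ (μ : Act Name) (t : Term Name), TTrans (.pre μ t) μ t
  | plusL : ∀ {t t' u : Term Name} {μ : Act Name}, TTrans t μ t' → TTrans (.plus t u) μ t'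
  | plusR : ∀ {t u u' : Term Name} {μ : Act Name}, TTrans u μ u' → TTrans (.plus t u) μ u'
  | parL : ∀ {t t' u : Term Name} {μ : Act Name}, TTrans t μ t' → TTrans (.par t u) μ (.par t' u)
  | parR : ∀ {t u u' : Term Name} {μ : Act Name}, TTrans u μ u' → TTrans (.par t u) μ (.par t u')
  | comm : ∀ {t t' u u' : Term Name} {α : Obs Name},
      TTrans t (.obs α) t' → TTrans u (.obs α.bar) u' → TTrans (.par t u) .tau (.par t' u')

/-- Labels `ℓ` of auxiliary transitions: `(x)` or `(x,y)`. -/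
inductive VLabel : Type where
  | one : ℕ → VLabel
  | two : ℕ → ℕ → VLabel

/-- Subscripts `ρ` of auxiliary transitions: an action `μ`, or a pair `α,τ`. -/
inductive RLabel (Name : Type) : Type where
  | act : Act Name → RLabel Name
  | obsTau : Obs Name → RLabel Name

/-- CCS configurations: configuration variables `x_μ`, terms, and parallel
compositions of configurations. -/
inductive Config (Name : Type) : Type where
  | cvar : ℕ → Act Name → Config Name
  | term : Term Name → Config Name
  | par : Config Name → Config Name → Config Name

/-- The auxiliary transition relation `t →^ℓ_ρ c` on CCS terms. -/
inductive Aux {Name : Type} : Term Name → VLabel → RLabel Name → Config Name → Prop where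
  | var : ∀ (x : ℕ) (μ : Act Name), Aux (.var x) (.one x) (.act μ) (.cvar x μ)
  | plusL : ∀ {t : Term Name} (u : Term Name) {ℓ : VLabel} {ρ : RLabel Name} {c : Config Name},
      Aux t ℓ ρ c → Aux (.plus t u) ℓ ρ c
  | plusR : ∀ (t : Term Name) {u : Term Name} {ℓ : VLabel} {ρ : RLabel Name} {c : Config Name},
      Aux u ℓ ρ c → Aux (.plus t u) ℓ ρ c
  | parL : ∀ {t : Term Name} (u : Term Name) {ℓ : VLabel} {ρ : RLabel Name} {c : Config Name},
      Aux t ℓ ρ c → Aux (.par t u) ℓ ρ (.par c (.term u))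
  | parR : ∀ (t : Term Name) {u : Term Name} {ℓ : VLabel} {ρ : RLabel Name} {c : Config Name},
      Aux u ℓ ρ c → Aux (.par t u) ℓ ρ (.par (.term t) c)
  | comm : ∀ {t u : Term Name} {x y : ℕ} {α : Obs Name} {c c' : Config Name},
      Aux t (.one x) (.act (.obs α)) c → Aux u (.one y) (.act (.obs α.bar)) c' →
      Aux (.par t u) (.two x y) (.act .tau) (.par c c')
  | commL : ∀ {t u u' : Term Name} {x : ℕ} {α : Obs Name} {c : Config Name},
      Aux t (.one x) (.act (.obs α)) c → TTrans u (.obs α.bar) u' →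
      Aux (.par t u) (.one x) (.obsTau α) (.par c (.term u'))
  | commR : ∀ {t t' u : Term Name} {x : ℕ} {α : Obs Name} {c : Config Name},
      TTrans t (.obs α) t' → Aux u (.one x) (.act (.obs α.bar)) c →
      Aux (.par t u) (.one x) (.obsTau α.bar) (.par (.term t') c)

/-- Applying a closed substitution (given by its action `σ` on ordinary
variables, and its action `κ` on configuration variables `x_μ`) to a
configuration. -/
def Config.substP {Name : Type} (σ : ℕ → Proc Name) (κ : ℕ → Act Name → Proc Name) :
    Config Name → Proc Name
  | .cvar x μ => κ x μ
  | .term t => Term.substP σ t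
  | .par c d => .par (Config.substP σ κ c) (Config.substP σ κ d)

/-- `updCV κ x μ p` is the update `κ[x_μ ↦ p]` of the configuration-variable
part of a substitution. -/
def updCV {Name : Type} [DecidableEq Name] (κ : ℕ → Act Name → Proc Name)
    (x : ℕ) (μ : Act Name) (p : Proc Name) : ℕ → Act Name → Proc Name :=
  fun y ν => if y = x ∧ ν = μ then p else κ y ν

lemma obs_ne_bar {Name : Type} (α : Obs Name) : Act.obs α ≠ Act.obs α.bar := by
  cases α <;> simp [Obs.bar]

lemma updCV_comm {Name : Type} [DecidableEq Name] (κ : ℕ → Act Name → Proc Name)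
    (x y : ℕ) (qx qy : Proc Name) (A B : Act Name) (h : A ≠ B) :
    updCV (updCV κ x A qx) y B qy = updCV (updCV κ y B qy) x A qx := by
  funext z ν
  unfold updCV
  by_cases hy : z = y ∧ ν = B <;> by_cases hx : z = x ∧ ν = A <;> simp [hy, hx, h, Ne.symm h]

lemma obs_decomp {Name : Type} [DecidableEq Name]
    (t : Term Name) (σ : ℕ → Proc Name) (α : Obs Name) (p : Proc Name)
    (h : PTrans (Term.substP σ t) (.obs α) p) :
    (∃ t' : Term Name, TTrans t (.obs α) t' ∧ Term.substP σ t' = p) ∨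
    (∃ (x : ℕ) (q : Proc Name) (c : Config Name),
      PTrans (σ x) (.obs α) q ∧ Aux t (.one x) (.act (.obs α)) c ∧
      ∀ κ : ℕ → Act Name → Proc Name, Config.substP σ (updCV κ x (.obs α) q) c = p) := by
  induction t generalizing p with
  | nil => simp only [Term.substP] at h; cases h
  | var x =>
    right
    exact ⟨x, p, .cvar x (.obs α), h, Aux.var x (.obs α), fun κ => by
      simp [Config.substP, updCV]⟩
  | pre μ t ih =>
    simp only [Term.substP] at h
    cases h
    exact Or.inl ⟨t, TTrans.pre _ _, rfl⟩
  | plus t u iht ihu =>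
    simp only [Term.substP] at h
    cases h with
    | plusL h =>
      rcases iht _ h with ⟨t', ht, he⟩ | ⟨x, q, c, hq, ha, he⟩
      · exact Or.inl ⟨t', TTrans.plusL ht, he⟩
      · exact Or.inr ⟨x, q, c, hq, Aux.plusL _ ha, he⟩
    | plusR h =>
      rcases ihu _ h with ⟨u', hu, he⟩ | ⟨x, q, c, hq, ha, he⟩
      · exact Or.inl ⟨u', TTrans.plusR hu, he⟩
      · exact Or.inr ⟨x, q, c, hq, Aux.plusR _ ha, he⟩
  | par t u iht ihu =>
    simp only [Term.substP] at h
    cases h with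
    | parL h =>
      rcases iht _ h with ⟨t', ht, he⟩ | ⟨x, q, c, hq, ha, he⟩
      · exact Or.inl ⟨.par t' u, TTrans.parL ht, by simp [Term.substP, he]⟩
      · exact Or.inr ⟨x, q, .par c (.term u), hq, Aux.parL _ ha,
          fun κ => by simp [Config.substP, he κ]⟩
    | parR h =>
      rcases ihu _ h with ⟨u', hu, he⟩ | ⟨x, q, c, hq, ha, he⟩
      · exact Or.inl ⟨.par t u', TTrans.parR hu, by simp [Term.substP, he]⟩
      · exact Or.inr ⟨x, q, .par (.term t) c, hq, Aux.parR _ ha,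
          fun κ => by simp [Config.substP, he κ]⟩

/-- decomposition of a silent transition of a closed instance of
a term into transitions of the term and/or of the processes substituted for
its variables. -/
theorem closed_to_open_tau {Name : Type} [DecidableEq Name] [Nonempty Name]
    (t : Term Name) (σ : ℕ → Proc Name) (p : Proc Name)
    (h : PTrans (Term.substP σ t) .tau p) :
    (∃ t' : Term Name, TTrans t .tau t' ∧ Term.substP σ t' = p) ∨
    (∃ (x : ℕ) (q : Proc Name) (c : Config Name),
      PTrans (σ x) .tau q ∧ Aux t (.one x) (.act .tau) c ∧
      ∀ κ : ℕ → Act Name → Proc Name, Config.substP σ (updCV κ x .tau q) c = p) ∨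
    (∃ (x : ℕ) (q : Proc Name) (c : Config Name) (α : Obs Name),
      PTrans (σ x) (.obs α) q ∧ Aux t (.one x) (.obsTau α) c ∧
      ∀ κ : ℕ → Act Name → Proc Name, Config.substP σ (updCV κ x (.obs α) q) c = p) ∨
    (∃ (x y : ℕ) (qx qy : Proc Name) (c : Config Name) (α : Obs Name),
      PTrans (σ x) (.obs α) qx ∧ PTrans (σ y) (.obs α.bar) qy ∧
      Aux t (.two x y) (.act .tau) c ∧
      ∀ κ : ℕ → Act Name → Proc Name,
        Config.substP σ (updCV (updCV κ x (.obs α) qx) y (.obs α.bar) qy) c = p) := by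
  induction t generalizing p with
  | nil => simp only [Term.substP] at h; cases h
  | var x =>
    refine Or.inr (Or.inl ⟨x, p, .cvar x .tau, h, Aux.var x .tau, fun κ => by
      simp [Config.substP, updCV]⟩)
  | pre μ t ih =>
    simp only [Term.substP] at h
    cases h
    exact Or.inl ⟨t, TTrans.pre _ _, rfl⟩
  | plus t u iht ihu =>
    simp only [Term.substP] at h
    cases h with
    | plusL h =>
      rcases iht _ h with ⟨t', ht, he⟩ | ⟨x, q, c, hq, ha, he⟩ |
        ⟨x, q, c, α, hq, ha, he⟩ | ⟨x, y, qx, qy, c, α, hx, hy, ha, he⟩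
      · exact Or.inl ⟨t', TTrans.plusL ht, he⟩
      · exact Or.inr (Or.inl ⟨x, q, c, hq, Aux.plusL _ ha, he⟩)
      · exact Or.inr (Or.inr (Or.inl ⟨x, q, c, α, hq, Aux.plusL _ ha, he⟩))
      · exact Or.inr (Or.inr (Or.inr ⟨x, y, qx, qy, c, α, hx, hy, Aux.plusL _ ha, he⟩))
    | plusR h =>
      rcases ihu _ h with ⟨u', hu, he⟩ | ⟨x, q, c, hq, ha, he⟩ |
        ⟨x, q, c, α, hq, ha, he⟩ | ⟨x, y, qx, qy, c, α, hx, hy, ha, he⟩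
      · exact Or.inl ⟨u', TTrans.plusR hu, he⟩
      · exact Or.inr (Or.inl ⟨x, q, c, hq, Aux.plusR _ ha, he⟩)
      · exact Or.inr (Or.inr (Or.inl ⟨x, q, c, α, hq, Aux.plusR _ ha, he⟩))
      · exact Or.inr (Or.inr (Or.inr ⟨x, y, qx, qy, c, α, hx, hy, Aux.plusR _ ha, he⟩))
  | par t u iht ihu =>
    simp only [Term.substP] at h
    cases h with
    | parL h =>
      rcases iht _ h with ⟨t', ht, he⟩ | ⟨x, q, c, hq, ha, he⟩ |
        ⟨x, q, c, α, hq, ha, he⟩ | ⟨x, y, qx, qy, c, α, hx, hy, ha, he⟩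
      · exact Or.inl ⟨.par t' u, TTrans.parL ht, by simp [Term.substP, he]⟩
      · exact Or.inr (Or.inl ⟨x, q, .par c (.term u), hq, Aux.parL _ ha,
          fun κ => by simp [Config.substP, he κ]⟩)
      · exact Or.inr (Or.inr (Or.inl ⟨x, q, .par c (.term u), α, hq, Aux.parL _ ha,
          fun κ => by simp [Config.substP, he κ]⟩))
      · exact Or.inr (Or.inr (Or.inr ⟨x, y, qx, qy, .par c (.term u), α, hx, hy,
          Aux.parL _ ha, fun κ => by simp [Config.substP, he κ]⟩))
    | parR h =>
      rcases ihu _ h with ⟨u', hu, he⟩ | ⟨x, q, c, hq, ha, he⟩ |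
        ⟨x, q, c, α, hq, ha, he⟩ | ⟨x, y, qx, qy, c, α, hx, hy, ha, he⟩
      · exact Or.inl ⟨.par t u', TTrans.parR hu, by simp [Term.substP, he]⟩
      · exact Or.inr (Or.inl ⟨x, q, .par (.term t) c, hq, Aux.parR _ ha,
          fun κ => by simp [Config.substP, he κ]⟩)
      · exact Or.inr (Or.inr (Or.inl ⟨x, q, .par (.term t) c, α, hq, Aux.parR _ ha,
          fun κ => by simp [Config.substP, he κ]⟩))
      · exact Or.inr (Or.inr (Or.inr ⟨x, y, qx, qy, .par (.term t) c, α, hx, hy,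
          Aux.parR _ ha, fun κ => by simp [Config.substP, he κ]⟩))
    | @comm _ p' _ q' α h1 h2 =>
      rcases obs_decomp t σ α _ h1 with ⟨t', ht, he1⟩ | ⟨x, qx, c, hqx, hax, he1⟩ <;>
        rcases obs_decomp u σ α.bar _ h2 with ⟨u', hu, he2⟩ | ⟨y, qy, c', hqy, hay, he2⟩
      · exact Or.inl ⟨.par t' u', TTrans.comm ht hu, by simp [Term.substP, he1, he2]⟩
      · -- t does a real transition, u uses a variable: commR
        exact Or.inr (Or.inr (Or.inl ⟨y, qy, .par (.term t') c', α.bar, hqy,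
          Aux.commR ht hay, fun κ => by simp [Config.substP, he1, he2 κ]⟩))
      · -- t uses a variable, u does a real transition: commL
        exact Or.inr (Or.inr (Or.inl ⟨x, qx, .par c (.term u'), α, hqx,
          Aux.commL hax hu, fun κ => by simp [Config.substP, he1 κ, he2]⟩))
      · -- both use variables: comm
        refine Or.inr (Or.inr (Or.inr ⟨x, y, qx, qy, .par c c', α, hqx, hqy,
          Aux.comm hax hay, fun κ => ?_⟩))
        simp only [Config.substP]
        rw [he2 (updCV κ x (.obs α) qx), updCV_comm _ _ _ _ _ _ _ (obs_ne_bar α),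
          he1 (updCV κ y (.obs α.bar) qy)]
end

section
/- Let n ≥ 2 and assume that p ∥ q ~RBB a ∥ p_n for CCS processes p, q with p ≁RBB 0 and q ≁RBB 0. Then either p ~RBB a.0 and q ~RBB p_n, or p ~RBB p_n and q ~RBB a.0. -/
/-- The action `a`. -/
def act_a {Name : Type} (a : Name) : Act Name := .obs (.pos a)

/-- `a^i`: `a^0 = 0` and `a^{i+1} = a.a^i`. -/
def apow {Name : Type} (a : Name) : ℕ → Proc Name
  | 0 => .nil
  | i + 1 => .pre (act_a a) (apow a i)

/-- `a^{≤i} = a^1 + a^2 + ⋯ + a^i` (for `i ≥ 1`). -/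
def ale {Name : Type} (a : Name) : ℕ → Proc Name
  | 0 => .nil
  | 1 => apow a 1
  | i + 2 => .plus (ale a (i + 1)) (apow a (i + 2))

/-- `p_n = Σ_{i=2}^n a.a^{≤i}` (for `n ≥ 2`). -/
def pn {Name : Type} (a : Name) : ℕ → Proc Name
  | 0 => .nil
  | 1 => .nil
  | 2 => .pre (act_a a) (ale a 2)
  | n + 3 => .plus (pn a (n + 2)) (.pre (act_a a) (ale a (n + 3)))


namespace CCSAux

variable {Name : Type}

open Proc Act

/-! ### Eps basics -/

theorem eps_refl (p : Proc Name) : EpsTrans p p := Relation.ReflTransGen.refl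

theorem eps_single {p q : Proc Name} (h : PTrans p Act.tau q) : EpsTrans p q :=
  Relation.ReflTransGen.single h

theorem eps_trans {p q r : Proc Name} (h1 : EpsTrans p q) (h2 : EpsTrans q r) : EpsTrans p r :=
  Relation.ReflTransGen.trans h1 h2

theorem eps_parL {p p' q : Proc Name} (h : EpsTrans p p') :
    EpsTrans (Proc.par p q) (Proc.par p' q) := by
  induction h with
  | refl => exact Relation.ReflTransGen.refl
  | tail _ hstep ih => exact ih.tail (PTrans.parL hstep)

theorem eps_parR {p q q' : Proc Name} (h : EpsTrans q q') :
    EpsTrans (Proc.par p q) (Proc.par p q') := by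
  induction h with
  | refl => exact Relation.ReflTransGen.refl
  | tail _ hstep ih => exact ih.tail (PTrans.parR hstep)

theorem eps_last {p q : Proc Name} (h : EpsTrans p q) :
    p = q ∨ ∃ c, EpsTrans p c ∧ PTrans c Act.tau q := by
  induction h with
  | refl => exact Or.inl rfl
  | tail h1 h2 _ => exact Or.inr ⟨_, h1, h2⟩

theorem eps_head {p q : Proc Name} (h : EpsTrans p q) :
    p = q ∨ ∃ c, PTrans p Act.tau c ∧ EpsTrans c q := by
  rcases (Relation.ReflTransGen.cases_head h) with rfl | ⟨c, hc, hcq⟩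
  · exact Or.inl rfl
  · exact Or.inr ⟨c, hc, hcq⟩

theorem bar_bar (α : Obs Name) : α.bar.bar = α := by cases α <;> rfl

theorem act_a_ne_tau (a : Name) : act_a a ≠ Act.tau := by simp [act_a]

/-! ### BB basics -/

theorem bb_isBisim : IsBranchingBisim (BB (Name := Name)) := by
  constructor
  · rintro p q ⟨R, hR, hpq⟩
    exact ⟨R, hR, hR.1 hpq⟩
  · rintro p q ⟨R, hR, hpq⟩ μ p' hstep
    rcases hR.2 p q hpq μ p' hstep with ⟨hμ, h'⟩ | ⟨q'', q', he, ht, h1, h2⟩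
    · exact Or.inl ⟨hμ, R, hR, h'⟩
    · exact Or.inr ⟨q'', q', he, ht, ⟨R, hR, h1⟩, ⟨R, hR, h2⟩⟩

theorem bb_symm {p q : Proc Name} (h : BB p q) : BB q p := bb_isBisim.1 h

theorem bb_refl (p : Proc Name) : BB p p := by
  refine ⟨Eq, ⟨fun x y h => h.symm, ?_⟩, rfl⟩
  rintro x y rfl μ x' hstep
  exact Or.inr ⟨x, x', Relation.ReflTransGen.refl, hstep, rfl, rfl⟩

/-! ### Semi-branching bisimulations and transitivity of BB -/

def SB (R : Proc Name → Proc Name → Prop) : Prop :=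
  Symmetric R ∧
  ∀ p q, R p q → ∀ μ p', PTrans p μ p' →
    ∃ q'' q', EpsTrans q q'' ∧ ((μ = Act.tau ∧ q' = q'') ∨ PTrans q'' μ q') ∧ R p q'' ∧ R p' q'

def SBB (p q : Proc Name) : Prop := ∃ R, SB R ∧ R p q

theorem sb_of_bisim {R : Proc Name → Proc Name → Prop} (hR : IsBranchingBisim R) : SB R := by
  refine ⟨hR.1, ?_⟩
  intro p q hpq μ p' hstep
  rcases hR.2 p q hpq μ p' hstep with ⟨hμ, h'⟩ | ⟨q'', q', he, ht, h1, h2⟩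
  · exact ⟨q, q, Relation.ReflTransGen.refl, Or.inl ⟨hμ, rfl⟩, hpq, h'⟩
  · exact ⟨q'', q', he, Or.inr ht, h1, h2⟩

theorem sbb_of_bb {p q : Proc Name} (h : BB p q) : SBB p q := by
  obtain ⟨R, hR, hpq⟩ := h
  exact ⟨R, sb_of_bisim hR, hpq⟩

theorem sbb_symm {p q : Proc Name} (h : SBB p q) : SBB q p := by
  obtain ⟨R, hR, hpq⟩ := h
  exact ⟨R, hR, hR.1 hpq⟩

theorem sbb_sb : SB (SBB (Name := Name)) := by
  constructor
  · exact fun p q h => sbb_symm h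
  · rintro p q ⟨R, hR, hpq⟩ μ p' hstep
    obtain ⟨q'', q', he, hd, h1, h2⟩ := hR.2 p q hpq μ p' hstep
    exact ⟨q'', q', he, hd, ⟨R, hR, h1⟩, ⟨R, hR, h2⟩⟩

theorem sb_eps {R : Proc Name → Proc Name → Prop} (hR : SB R) {p q p₁ : Proc Name}
    (hpq : R p q) (he : EpsTrans p p₁) : ∃ q₁, EpsTrans q q₁ ∧ R p₁ q₁ := by
  induction he with
  | refl => exact ⟨q, Relation.ReflTransGen.refl, hpq⟩
  | tail _ hstep ih =>
    obtain ⟨q₁, he₁, hb⟩ := ih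
    obtain ⟨q'', q', he₂, hd, _, h2⟩ := hR.2 _ _ hb _ _ hstep
    rcases hd with ⟨_, rfl⟩ | ht
    · exact ⟨_, he₁.trans he₂, h2⟩
    · exact ⟨_, (he₁.trans he₂).tail ht, h2⟩

/-- half of the composition diagram chase -/
theorem sb_comp_half {R S : Proc Name → Proc Name → Prop} (hR : SB R) (hS : SB S)
    {x y z : Proc Name} (hxy : R x y) (hyz : S y z) {μ x'} (hstep : PTrans x μ x') :
    ∃ z'' z', EpsTrans z z'' ∧ ((μ = Act.tau ∧ z' = z'') ∨ PTrans z'' μ z') ∧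
      (∃ b, R x b ∧ S b z'') ∧ (∃ b, R x' b ∧ S b z') := by
  obtain ⟨y'', y', he, hd, h1, h2⟩ := hR.2 _ _ hxy _ _ hstep
  obtain ⟨z₁, hez₁, hs₁⟩ := sb_eps hS hyz he
  rcases hd with ⟨rfl, rfl⟩ | ht
  · exact ⟨z₁, z₁, hez₁, Or.inl ⟨rfl, rfl⟩, ⟨_, h1, hs₁⟩, ⟨_, h2, hs₁⟩⟩
  · obtain ⟨z₂, z₃, hez₂, hd₂, k1, k2⟩ := hS.2 _ _ hs₁ _ _ ht
    rcases hd₂ with ⟨rfl, rfl⟩ | ht₂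
    · exact ⟨_, _, hez₁.trans hez₂, Or.inl ⟨rfl, rfl⟩, ⟨_, h1, k1⟩, ⟨_, h2, k2⟩⟩
    · exact ⟨_, _, hez₁.trans hez₂, Or.inr ht₂, ⟨_, h1, k1⟩, ⟨_, h2, k2⟩⟩

theorem sbb_trans {x y z : Proc Name} (h1 : SBB x y) (h2 : SBB y z) : SBB x z := by
  obtain ⟨R, hR, hxy⟩ := h1
  obtain ⟨S, hS, hyz⟩ := h2
  refine ⟨fun u v => (∃ b, R u b ∧ S b v) ∨ (∃ b, R v b ∧ S b u), ⟨?_, ?_⟩, Or.inl ⟨y, hxy, hyz⟩⟩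
  · rintro u v (h | h)
    · exact Or.inr h
    · exact Or.inl h
  · rintro u v (⟨b, hub, hbv⟩ | ⟨b, hvb, hbu⟩) μ u' hstep
    · obtain ⟨z'', z', he, hd, k1, k2⟩ := sb_comp_half hR hS hub hbv hstep
      exact ⟨z'', z', he, hd, Or.inl k1, Or.inl k2⟩
    · -- pair (u,v) with R v b, S b u : use symmetry: S u b, R b v
      obtain ⟨z'', z', he, hd, k1, k2⟩ := sb_comp_half hS hR (hS.1 hbu) (hR.1 hvb) hstep
      refine ⟨z'', z', he, hd, Or.inr ?_, Or.inr ?_⟩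
      · obtain ⟨b₁, hb₁, hb₂⟩ := k1
        exact ⟨b₁, hR.1 hb₂, hS.1 hb₁⟩
      · obtain ⟨b₁, hb₁, hb₂⟩ := k2
        exact ⟨b₁, hR.1 hb₂, hS.1 hb₁⟩

/-- Stuttering: intermediate states of an inert τ-path are equivalent. -/
theorem sbb_stutter {x s m e : Proc Name} (h1 : SBB x s) (h2 : SBB x e)
    (he1 : EpsTrans s m) (he2 : EpsTrans m e) : SBB x m := by
  classical
  set St : Proc Name → Proc Name → Prop :=
    fun u v => ∃ s' e', EpsTrans s' v ∧ EpsTrans v e' ∧ SBB u s' ∧ SBB u e' with hSt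
  refine ⟨fun u v => SBB u v ∨ St u v ∨ St v u, ⟨?_, ?_⟩, Or.inr (Or.inl ⟨s, e, he1, he2, h1, h2⟩)⟩
  · rintro u v (h | h | h)
    · exact Or.inl (sbb_symm h)
    · exact Or.inr (Or.inr h)
    · exact Or.inr (Or.inl h)
  · rintro u v (h | ⟨s', e', hes, hee, hus, hue⟩ | ⟨s', e', hes, hee, hvs, hve⟩) μ u' hstep
    · obtain ⟨q'', q', hA, hB, hC, hD⟩ := sbb_sb.2 _ _ h _ _ hstep
      exact ⟨q'', q', hA, hB, Or.inl hC, Or.inl hD⟩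
    · -- pair (u, v) where v is mid state: match using SBB u e'
      obtain ⟨q'', q', hA, hB, hC, hD⟩ := sbb_sb.2 _ _ hue _ _ hstep
      exact ⟨q'', q', hee.trans hA, hB, Or.inl hC, Or.inl hD⟩
    · -- pair (u, v) where u is mid state (St v u): moves of mid state u
      obtain ⟨x₁, hex₁, hux₁⟩ := sb_eps sbb_sb (sbb_symm hvs) hes
      obtain ⟨x₂, x₃, hA, hB, hC, hD⟩ := sbb_sb.2 _ _ hux₁ _ _ hstep
      exact ⟨x₂, x₃, hex₁.trans hA, hB, Or.inl hC, Or.inl hD⟩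

theorem sbb_isBisim : IsBranchingBisim (SBB (Name := Name)) := by
  refine ⟨fun p q h => sbb_symm h, ?_⟩
  intro p q hpq μ p' hstep
  obtain ⟨q'', q', he, hd, h1, h2⟩ := sbb_sb.2 p q hpq μ p' hstep
  rcases hd with ⟨rfl, rfl⟩ | ht
  · rcases eps_last he with rfl | ⟨q₁, he₁, ht₁⟩
    · exact Or.inl ⟨rfl, h2⟩
    · refine Or.inr ⟨q₁, _, he₁, ht₁, ?_, h2⟩
      exact sbb_stutter hpq h1 he₁ (eps_single ht₁)
  · exact Or.inr ⟨q'', q', he, ht, h1, h2⟩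

theorem bb_of_sbb {p q : Proc Name} (h : SBB p q) : BB p q := ⟨SBB, sbb_isBisim, h⟩

theorem bb_trans {x y z : Proc Name} (h1 : BB x y) (h2 : BB y z) : BB x z :=
  bb_of_sbb (sbb_trans (sbb_of_bb h1) (sbb_of_bb h2))

end CCSAux

namespace CCSAux

variable {Name : Type}

/-! ### depth -/

def actW : Act Name → ℕ
  | .obs _ => 1
  | .tau => 0

def dep : Proc Name → ℕ
  | .nil => 0
  | .pre μ p => dep p + actW μ
  | .plus p q => max (dep p) (dep q)
  | .par p q => dep p + dep q

theorem dep_step {p p' : Proc Name} {μ : Act Name} (h : PTrans p μ p') :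
    dep p' + actW μ ≤ dep p := by
  induction h with
  | pre μ p => simp [dep]
  | plusL h ih => simp only [dep]; omega
  | plusR h ih => simp only [dep]; omega
  | parL h ih => simp only [dep]; omega
  | parR h ih => simp only [dep]; omega
  | comm h1 h2 ih1 ih2 => simp only [dep, actW] at *; omega

theorem dep_eps_le {p p' : Proc Name} (h : EpsTrans p p') : dep p' ≤ dep p := by
  induction h with
  | refl => exact le_rfl
  | tail _ hstep ih => have := dep_step hstep; simp [actW] at this; omega

inductive Deep : Proc Name → ℕ → Prop
  | zero (p : Proc Name) : Deep p 0
  | tau {p p' : Proc Name} {k : ℕ} : PTrans p Act.tau p' → Deep p' k → Deep p k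
  | obs {p p' : Proc Name} {α : Obs Name} {k : ℕ} :
      PTrans p (Act.obs α) p' → Deep p' k → Deep p (k + 1)

theorem deep_le_dep {p : Proc Name} {k : ℕ} (h : Deep p k) : k ≤ dep p := by
  induction h with
  | zero => omega
  | tau hstep _ ih => have := dep_step hstep; simp [actW] at this; omega
  | obs hstep _ ih => have := dep_step hstep; simp [actW] at this; omega

theorem deep_plusL {p q : Proc Name} {k : ℕ} (h : Deep p k) : Deep (Proc.plus p q) k := by
  cases h with
  | zero => exact Deep.zero _
  | tau hstep hd => exact Deep.tau (PTrans.plusL hstep) hd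
  | obs hstep hd => exact Deep.obs (PTrans.plusL hstep) hd

theorem deep_plusR {p q : Proc Name} {k : ℕ} (h : Deep q k) : Deep (Proc.plus p q) k := by
  cases h with
  | zero => exact Deep.zero _
  | tau hstep hd => exact Deep.tau (PTrans.plusR hstep) hd
  | obs hstep hd => exact Deep.obs (PTrans.plusR hstep) hd

theorem deep_parR {p q : Proc Name} {k : ℕ} (h : Deep q k) : Deep (Proc.par p q) k := by
  induction h with
  | zero => exact Deep.zero _
  | tau hstep _ ih => exact Deep.tau (PTrans.parR hstep) ih
  | obs hstep _ ih => exact Deep.obs (PTrans.parR hstep) ih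

theorem deep_par_add {p q : Proc Name} {i j : ℕ} (h1 : Deep p i) (h2 : Deep q j) :
    Deep (Proc.par p q) (i + j) := by
  induction h1 with
  | zero => simpa using deep_parR h2
  | tau hstep _ ih => exact Deep.tau (PTrans.parL hstep) ih
  | obs hstep _ ih =>
    have : Deep (Proc.par _ q) ((_ + j) + 1) := Deep.obs (PTrans.parL hstep) ih
    simpa [Nat.add_right_comm] using this

theorem deep_dep (p : Proc Name) : Deep p (dep p) := by
  induction p with
  | nil => exact Deep.zero _
  | pre μ p ih =>
    cases μ with
    | obs α => simpa [dep, actW] using Deep.obs (PTrans.pre _ _) ih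
    | tau => simpa [dep, actW] using Deep.tau (PTrans.pre _ _) ih
  | plus p q ihp ihq =>
    rcases Nat.le_total (dep p) (dep q) with hle | hle
    · have : dep (Proc.plus p q) = dep q := by simp [dep]; omega
      rw [this]; exact deep_plusR ihq
    · have : dep (Proc.plus p q) = dep p := by simp [dep]; omega
      rw [this]; exact deep_plusL ihp
  | par p q ihp ihq => exact deep_par_add ihp ihq

theorem deep_eps {p p' : Proc Name} {k : ℕ} (he : EpsTrans p p') (hd : Deep p' k) :
    Deep p k := by
  induction he generalizing k with
  | refl => exact hd
  | tail _ hstep ih => exact ih (Deep.tau hstep hd)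

theorem deep_bb {p q : Proc Name} {k : ℕ} (hd : Deep p k) (h : BB p q) : Deep q k := by
  induction hd generalizing q with
  | zero => exact Deep.zero _
  | tau hstep _ ih =>
    rcases bb_isBisim.2 _ _ h _ _ hstep with ⟨_, h'⟩ | ⟨q'', q', he, ht, _, h2⟩
    · exact ih h'
    · exact deep_eps he (Deep.tau ht (ih h2))
  | obs hstep _ ih =>
    rcases bb_isBisim.2 _ _ h _ _ hstep with ⟨heq, _⟩ | ⟨q'', q', he, ht, _, h2⟩
    · exact absurd heq (by simp)
    · exact deep_eps he (Deep.obs ht (ih h2))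

theorem dep_bb {p q : Proc Name} (h : BB p q) : dep p = dep q :=
  le_antisymm (deep_le_dep (deep_bb (deep_dep p) h))
    (deep_le_dep (deep_bb (deep_dep q) (bb_symm h)))

theorem bb_nil_of_dep_zero {p : Proc Name} (h : dep p = 0) : BB p Proc.nil := by
  refine ⟨fun u v => (dep u = 0 ∧ v = Proc.nil) ∨ (dep v = 0 ∧ u = Proc.nil), ⟨?_, ?_⟩,
    Or.inl ⟨h, rfl⟩⟩
  · rintro u v (⟨h1, rfl⟩ | ⟨h1, rfl⟩)
    · exact Or.inr ⟨h1, rfl⟩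
    · exact Or.inl ⟨h1, rfl⟩
  · rintro u v (⟨h1, rfl⟩ | ⟨h1, rfl⟩) μ u' hstep
    · have hs := dep_step hstep
      cases μ with
      | obs α => simp [actW] at hs; omega
      | tau =>
        refine Or.inl ⟨rfl, Or.inl ⟨?_, rfl⟩⟩
        simp [actW] at hs; omega
    · exact absurd hstep (by intro hh; cases hh)

theorem dep_max_move {x : Proc Name} {k : ℕ} (hd : Deep x k) (hk : 1 ≤ k) :
    ∃ x₁ β x₂, EpsTrans x x₁ ∧ PTrans x₁ (Act.obs β) x₂ ∧ Deep x₂ (k - 1) := by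
  induction hd with
  | zero => omega
  | tau hstep _ ih =>
    obtain ⟨x₁, β, x₂, he, hs, hd'⟩ := ih hk
    exact ⟨x₁, β, x₂, (eps_single hstep).trans he, hs, hd'⟩
  | obs hstep hd' =>
    exact ⟨_, _, _, Relation.ReflTransGen.refl, hstep, by simpa using hd'⟩

end CCSAux

namespace CCSAux

variable {Name : Type}

/-! ### Sequential all-a processes -/

inductive SeqA (a : Name) : Proc Name → Prop
  | nil : SeqA a Proc.nil
  | pre {t} : SeqA a t → SeqA a (Proc.pre (act_a a) t)
  | plus {t u} : SeqA a t → SeqA a u → SeqA a (Proc.plus t u)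

theorem seqA_step {a : Name} {t t' : Proc Name} {μ : Act Name}
    (hs : SeqA a t) (h : PTrans t μ t') : μ = act_a a ∧ SeqA a t' := by
  induction h with
  | pre μ p => cases hs with | pre hs' => exact ⟨rfl, hs'⟩
  | plusL h ih => cases hs with | plus h1 h2 => exact ih h1
  | plusR h ih => cases hs with | plus h1 h2 => exact ih h2
  | parL h ih => cases hs
  | parR h ih => cases hs
  | comm h1 h2 ih1 ih2 => cases hs

inductive Good (a : Name) : Proc Name → Prop
  | seq {t} : SeqA a t → Good a t
  | par {t u} : SeqA a t → SeqA a u → Good a (Proc.par t u)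

theorem good_step {a : Name} {g g' : Proc Name} {μ : Act Name}
    (hg : Good a g) (h : PTrans g μ g') : μ = act_a a ∧ Good a g' := by
  cases hg with
  | seq hs =>
    obtain ⟨h1, h2⟩ := seqA_step hs h
    exact ⟨h1, Good.seq h2⟩
  | par hs ht =>
    cases h with
    | parL h' => obtain ⟨h1, h2⟩ := seqA_step hs h'; exact ⟨h1, Good.par h2 ht⟩
    | parR h' => obtain ⟨h1, h2⟩ := seqA_step ht h'; exact ⟨h1, Good.par hs h2⟩
    | comm h1 h2 =>
      exfalso
      obtain ⟨e1, _⟩ := seqA_step hs h1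
      obtain ⟨e2, _⟩ := seqA_step ht h2
      simp only [act_a, Act.obs.injEq] at e1 e2
      subst e1
      simp [Obs.bar] at e2

theorem good_no_tau {a : Name} {g g' : Proc Name} (hg : Good a g) (h : PTrans g Act.tau g') :
    False := by
  have := (good_step hg h).1
  exact act_a_ne_tau a this.symm

theorem eps_good {a : Name} {g u : Proc Name} (hg : Good a g) (he : EpsTrans g u) : u = g := by
  rcases eps_head he with rfl | ⟨c, hc, _⟩
  · rfl
  · exact absurd hc (fun hh => good_no_tau hg hh)

/-! ### L1 lemmas: interacting with a τ-free all-a process -/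

theorem L1a1 {a : Name} {x x' g : Proc Name} (hbb : BB x g) (hg : Good a g)
    (h : PTrans x Act.tau x') : BB x' g := by
  rcases bb_isBisim.2 _ _ hbb _ _ h with ⟨_, h'⟩ | ⟨q'', q', he, ht, _, _⟩
  · exact h'
  · have := eps_good hg he
    subst this
    exact absurd ht (fun hh => good_no_tau hg hh)

theorem L1a {a : Name} {x x' g : Proc Name} (hbb : BB x g) (hg : Good a g)
    (h : EpsTrans x x') : BB x' g := by
  induction h with
  | refl => exact hbb
  | tail _ hstep ih => exact L1a1 ih hg hstep

theorem L1b {a : Name} {x x' g : Proc Name} {β : Obs Name} (hbb : BB x g) (hg : Good a g)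
    (h : PTrans x (Act.obs β) x') :
    Act.obs β = act_a a ∧ ∃ g', PTrans g (act_a a) g' ∧ BB x' g' := by
  rcases bb_isBisim.2 _ _ hbb _ _ h with ⟨heq, _⟩ | ⟨q'', q', he, ht, _, h2⟩
  · exact absurd heq (by simp)
  · have := eps_good hg he
    subst this
    obtain ⟨hl, _⟩ := good_step hg ht
    refine ⟨hl, q', ?_, h2⟩
    rwa [hl] at ht

theorem L1c {a : Name} {x g g' : Proc Name} {μ : Act Name} (hbb : BB x g) (hg : Good a g)
    (h : PTrans g μ g') :
    ∃ x₁ x₂, EpsTrans x x₁ ∧ PTrans x₁ μ x₂ ∧ BB x₁ g ∧ BB x₂ g' := by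
  rcases bb_isBisim.2 _ _ (bb_symm hbb) _ _ h with ⟨heq, _⟩ | ⟨x₁, x₂, he, ht, h1, h2⟩
  · subst heq
    exact absurd h (fun hh => good_no_tau hg hh)
  · exact ⟨x₁, x₂, he, ht, bb_symm h1, bb_symm h2⟩

/-! ### apow / ale / pn facts -/

theorem seqA_apow (a : Name) : ∀ k, SeqA a (apow a k)
  | 0 => SeqA.nil
  | k + 1 => SeqA.pre (seqA_apow a k)

theorem seqA_ale (a : Name) : ∀ i, SeqA a (ale a i)
  | 0 => SeqA.nil
  | 1 => seqA_apow a 1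
  | i + 2 => SeqA.plus (seqA_ale a (i + 1)) (seqA_apow a (i + 2))

theorem seqA_pn (a : Name) : ∀ m, SeqA a (pn a m)
  | 0 => SeqA.nil
  | 1 => SeqA.nil
  | 2 => SeqA.pre (seqA_ale a 2)
  | m + 3 => SeqA.plus (seqA_pn a (m + 2)) (SeqA.pre (seqA_ale a (m + 3)))

@[simp] theorem dep_apow (a : Name) : ∀ k, dep (apow a k) = k
  | 0 => rfl
  | k + 1 => by simp [apow, dep, act_a, actW, dep_apow a k]

@[simp] theorem dep_ale (a : Name) : ∀ i, dep (ale a i) = i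
  | 0 => rfl
  | 1 => by simp [ale]
  | i + 2 => by
      simp [ale, dep, dep_ale a (i + 1), dep_apow a (i + 2), act_a, actW]
      try omega

@[simp] theorem dep_pn (a : Name) : ∀ m, dep (pn a (m + 2)) = m + 3
  | 0 => by simp [pn, dep, act_a, actW]
  | m + 1 => by
      show dep (Proc.plus (pn a (m + 2)) (Proc.pre (act_a a) (ale a (m + 3)))) = m + 4
      simp [dep, dep_pn a m, act_a, actW]
      try omega

theorem apow_step {a : Name} {k : ℕ} {μ : Act Name} {t : Proc Name}
    (h : PTrans (apow a k) μ t) : ∃ k', k = k' + 1 ∧ μ = act_a a ∧ t = apow a k' := by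
  cases k with
  | zero => exact absurd h (by intro hh; cases hh)
  | succ k => cases h with | pre => exact ⟨k, rfl, rfl, rfl⟩

theorem apow_move (a : Name) (k : ℕ) : PTrans (apow a (k + 1)) (act_a a) (apow a k) :=
  PTrans.pre _ _

theorem ale_step {a : Name} : ∀ {i : ℕ} {μ : Act Name} {t : Proc Name},
    PTrans (ale a i) μ t → μ = act_a a ∧ ∃ j, j < i ∧ t = apow a j := by
  intro i
  induction i using Nat.strong_induction_on with
  | _ i ih =>
    intro μ t h
    match i, h with
    | 0, h => exact absurd h (by intro hh; cases hh)
    | 1, h =>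
      obtain ⟨k', hk, hμ, ht⟩ := apow_step h
      exact ⟨hμ, k', by omega, ht⟩
    | (i + 2), h =>
      cases h with
      | plusL h' =>
        obtain ⟨hμ, j, hj, ht⟩ := ih (i + 1) (by omega) h'
        exact ⟨hμ, j, by omega, ht⟩
      | plusR h' =>
        obtain ⟨k', hk, hμ, ht⟩ := apow_step h'
        exact ⟨hμ, k', by omega, ht⟩

theorem ale_move (a : Name) : ∀ {i j : ℕ}, j < i → PTrans (ale a i) (act_a a) (apow a j) := by
  intro i
  induction i using Nat.strong_induction_on with
  | _ i ih =>
    intro j hj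
    match i, hj with
    | 1, hj =>
      have : j = 0 := by omega
      subst this
      exact apow_move a 0
    | (i + 2), hj =>
      rcases Nat.lt_or_ge j (i + 1) with h' | h'
      · exact PTrans.plusL (ih (i + 1) (by omega) h')
      · have : j = i + 1 := by omega
        subst this
        exact PTrans.plusR (apow_move a (i + 1))

theorem pn_step {a : Name} : ∀ {m : ℕ} {μ : Act Name} {t : Proc Name}, 2 ≤ m →
    PTrans (pn a m) μ t → μ = act_a a ∧ ∃ i, 2 ≤ i ∧ i ≤ m ∧ t = ale a i := by
  intro m
  induction m using Nat.strong_induction_on with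
  | _ m ih =>
    intro μ t hm h
    match m, hm, h with
    | 2, _, h => cases h with | pre => exact ⟨rfl, 2, by omega, by omega, rfl⟩
    | (m + 3), _, h =>
      cases h with
      | plusL h' =>
        obtain ⟨hμ, i, h1, h2, h3⟩ := ih (m + 2) (by omega) (by omega) h'
        exact ⟨hμ, i, h1, by omega, h3⟩
      | plusR h' =>
        cases h' with | pre => exact ⟨rfl, m + 3, by omega, by omega, rfl⟩

theorem pn_move (a : Name) : ∀ {m i : ℕ}, 2 ≤ i → i ≤ m →
    PTrans (pn a m) (act_a a) (ale a i) := by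
  intro m
  induction m using Nat.strong_induction_on with
  | _ m ih =>
    intro i h2 hm
    match m, hm with
    | 0, hm => exact absurd hm (by omega)
    | 1, hm => exact absurd hm (by omega)
    | 2, hm =>
      have : i = 2 := by omega
      subst this
      exact PTrans.pre _ _
    | (m + 3), hm =>
      rcases Nat.lt_or_ge i (m + 3) with h' | h'
      · exact PTrans.plusL (ih (m + 2) (by omega) h2 (by omega))
      · have : i = m + 3 := by omega
        subst this
        exact PTrans.plusR (PTrans.pre _ _)

end CCSAux

namespace CCSAux

variable {Name : Type}

/-! ### structural BB facts -/

theorem bb_nil_par (x : Proc Name) : BB (Proc.par Proc.nil x) x := by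
  refine ⟨fun u v => (∃ w, u = Proc.par Proc.nil w ∧ v = w) ∨
    (∃ w, v = Proc.par Proc.nil w ∧ u = w), ⟨?_, ?_⟩, Or.inl ⟨x, rfl, rfl⟩⟩
  · rintro u v (⟨w, rfl, rfl⟩ | ⟨w, rfl, rfl⟩)
    · exact Or.inr ⟨_, rfl, rfl⟩
    · exact Or.inl ⟨_, rfl, rfl⟩
  · rintro u v (⟨w, rfl, rfl⟩ | ⟨w, rfl, rfl⟩) μ u' hstep
    · cases hstep with
      | parL h' => exact absurd h' (by intro hh; cases hh)
      | parR h' =>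
        exact Or.inr ⟨_, _, Relation.ReflTransGen.refl, h', Or.inl ⟨_, rfl, rfl⟩,
          Or.inl ⟨_, rfl, rfl⟩⟩
      | comm h1 h2 => exact absurd h1 (by intro hh; cases hh)
    · exact Or.inr ⟨_, Proc.par Proc.nil u', Relation.ReflTransGen.refl,
        PTrans.parR hstep, Or.inr ⟨_, rfl, rfl⟩, Or.inr ⟨u', rfl, rfl⟩⟩

theorem bb_par_cong {x x' y y' : Proc Name} (h1 : BB x x') (h2 : BB y y') :
    BB (Proc.par x y) (Proc.par x' y') := by
  refine ⟨fun u v => ∃ a b c d, u = Proc.par a b ∧ v = Proc.par c d ∧ BB a c ∧ BB b d,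
    ⟨?_, ?_⟩, x, y, x', y', rfl, rfl, h1, h2⟩
  · rintro u v ⟨a, b, c, d, rfl, rfl, hac, hbd⟩
    exact ⟨c, d, a, b, rfl, rfl, bb_symm hac, bb_symm hbd⟩
  · rintro u v ⟨a, b, c, d, rfl, rfl, hac, hbd⟩ μ u' hstep
    cases hstep with
    | parL h' =>
      rcases bb_isBisim.2 _ _ hac _ _ h' with ⟨rfl, hbb⟩ | ⟨c₁, c₂, he, ht, g1, g2⟩
      · exact Or.inl ⟨rfl, _, _, _, _, rfl, rfl, hbb, hbd⟩
      · exact Or.inr ⟨Proc.par c₁ d, Proc.par c₂ d, eps_parL he, PTrans.parL ht,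
          ⟨_, _, _, _, rfl, rfl, g1, hbd⟩, ⟨_, _, _, _, rfl, rfl, g2, hbd⟩⟩
    | parR h' =>
      rcases bb_isBisim.2 _ _ hbd _ _ h' with ⟨rfl, hbb⟩ | ⟨d₁, d₂, he, ht, g1, g2⟩
      · exact Or.inl ⟨rfl, _, _, _, _, rfl, rfl, hac, hbb⟩
      · exact Or.inr ⟨Proc.par c d₁, Proc.par c d₂, eps_parR he, PTrans.parR ht,
          ⟨_, _, _, _, rfl, rfl, hac, g1⟩, ⟨_, _, _, _, rfl, rfl, hac, g2⟩⟩
    | comm hα hβ =>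
      rcases bb_isBisim.2 _ _ hac _ _ hα with ⟨heq, _⟩ | ⟨c₁, c₂, heC, htC, g1, g2⟩
      · exact absurd heq (by simp)
      rcases bb_isBisim.2 _ _ hbd _ _ hβ with ⟨heq, _⟩ | ⟨d₁, d₂, heD, htD, k1, k2⟩
      · exact absurd heq (by simp)
      exact Or.inr ⟨Proc.par c₁ d₁, Proc.par c₂ d₂, (eps_parL heC).trans (eps_parR heD),
        PTrans.comm htC htD, ⟨_, _, _, _, rfl, rfl, g1, k1⟩, ⟨_, _, _, _, rfl, rfl, g2, k2⟩⟩

theorem bb_par_swap (x y : Proc Name) : BB (Proc.par x y) (Proc.par y x) := by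
  refine ⟨fun u v => ∃ s t, u = Proc.par s t ∧ v = Proc.par t s, ⟨?_, ?_⟩, x, y, rfl, rfl⟩
  · rintro u v ⟨s, t, rfl, rfl⟩
    exact ⟨t, s, rfl, rfl⟩
  · rintro u v ⟨s, t, rfl, rfl⟩ μ u' hstep
    cases hstep with
    | parL h' =>
      exact Or.inr ⟨Proc.par t s, _, Relation.ReflTransGen.refl, PTrans.parR h',
        ⟨s, t, rfl, rfl⟩, ⟨_, t, rfl, rfl⟩⟩
    | parR h' =>
      exact Or.inr ⟨Proc.par t s, _, Relation.ReflTransGen.refl, PTrans.parL h',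
        ⟨s, t, rfl, rfl⟩, ⟨s, _, rfl, rfl⟩⟩
    | comm hα hβ =>
      refine Or.inr ⟨Proc.par t s, _, Relation.ReflTransGen.refl, PTrans.comm hβ ?_,
        ⟨s, t, rfl, rfl⟩, ⟨_, _, rfl, rfl⟩⟩
      rwa [bar_bar]

theorem bb_pow_par (a : Name) (i j : ℕ) :
    BB (Proc.par (apow a i) (apow a j)) (apow a (i + j)) := by
  refine ⟨fun u v => (∃ i' j', u = Proc.par (apow a i') (apow a j') ∧ v = apow a (i' + j')) ∨
    (∃ i' j', v = Proc.par (apow a i') (apow a j') ∧ u = apow a (i' + j')), ⟨?_, ?_⟩,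
    Or.inl ⟨i, j, rfl, rfl⟩⟩
  · rintro u v (h | h)
    · exact Or.inr h
    · exact Or.inl h
  · rintro u v (⟨i', j', rfl, rfl⟩ | ⟨i', j', rfl, rfl⟩) μ u' hstep
    · cases hstep with
      | parL h' =>
        obtain ⟨k', rfl, rfl, rfl⟩ := apow_step h'
        refine Or.inr ⟨apow a (k' + 1 + j'), apow a (k' + j'), Relation.ReflTransGen.refl,
          ?_, Or.inl ⟨_, _, rfl, rfl⟩, Or.inl ⟨k', j', rfl, rfl⟩⟩
        have : k' + 1 + j' = (k' + j') + 1 := by omega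
        rw [this]
        exact apow_move a _
      | parR h' =>
        obtain ⟨k', rfl, rfl, rfl⟩ := apow_step h'
        refine Or.inr ⟨apow a (i' + (k' + 1)), apow a (i' + k'), Relation.ReflTransGen.refl,
          ?_, Or.inl ⟨_, _, rfl, rfl⟩, Or.inl ⟨i', k', rfl, rfl⟩⟩
        have : i' + (k' + 1) = (i' + k') + 1 := by omega
        rw [this]
        exact apow_move a _
      | comm hα hβ =>
        exfalso
        obtain ⟨k1, _, e1, _⟩ := apow_step hα
        obtain ⟨k2, _, e2, _⟩ := apow_step hβ
        simp only [act_a, Act.obs.injEq] at e1 e2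
        subst e1
        simp [Obs.bar] at e2
    · obtain ⟨k', hk, rfl, rfl⟩ := apow_step hstep
      cases i' with
      | zero =>
        have hj : j' = k' + 1 := by omega
        subst hj
        exact Or.inr ⟨Proc.par (apow a 0) (apow a (k' + 1)), Proc.par (apow a 0) (apow a k'),
          Relation.ReflTransGen.refl, PTrans.parR (apow_move a k'),
          Or.inr ⟨0, k' + 1, rfl, rfl⟩, Or.inr ⟨0, k', rfl, by simp⟩⟩
      | succ i'' =>
        have hk2 : i'' + j' = k' := by omega
        exact Or.inr ⟨Proc.par (apow a (i'' + 1)) (apow a j'), Proc.par (apow a i'') (apow a j'),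
          Relation.ReflTransGen.refl, PTrans.parL (apow_move a i''),
          Or.inr ⟨i'' + 1, j', rfl, rfl⟩, Or.inr ⟨i'', j', rfl, by rw [hk2]⟩⟩

end CCSAux

namespace CCSAux

variable {Name : Type}

theorem dep_par (v w : Proc Name) : dep (Proc.par v w) = dep v + dep w := rfl

/-- Components keep their depth along inert τ-paths of a parallel composition. -/
theorem comp_eps {a : Name} {g v w u : Proc Name} (hg : Good a g)
    (hbb : BB (Proc.par v w) g) (he : EpsTrans (Proc.par v w) u) :
    ∃ v₁ w₁, u = Proc.par v₁ w₁ ∧ EpsTrans v v₁ ∧ EpsTrans w w₁ ∧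
      dep v₁ = dep v ∧ dep w₁ = dep w ∧ BB u g := by
  have hsum : dep v + dep w = dep g := by
    have := dep_bb hbb
    rwa [dep_par] at this
  induction he with
  | refl =>
    exact ⟨v, w, rfl, Relation.ReflTransGen.refl, Relation.ReflTransGen.refl, rfl, rfl, hbb⟩
  | tail he' hstep ih =>
    obtain ⟨v₁, w₁, rfl, hev, hew, hdv, hdw, hbb₁⟩ := ih
    have hbbu := L1a1 hbb₁ hg hstep
    have hdu : dep _ = dep g := dep_bb hbbu
    cases hstep with
    | parL h' =>
      have h1 := dep_step h'
      simp only [actW] at h1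
      rw [dep_par] at hdu
      refine ⟨_, w₁, rfl, hev.tail h', hew, ?_, hdw, hbbu⟩
      omega
    | parR h' =>
      have h1 := dep_step h'
      simp only [actW] at h1
      rw [dep_par] at hdu
      refine ⟨v₁, _, rfl, hev, hew.tail h', hdv, ?_, hbbu⟩
      omega
    | comm h1 h2 =>
      exfalso
      have k1 := dep_step h1
      have k2 := dep_step h2
      simp only [actW] at k1 k2
      rw [dep_par] at hdu
      omega

/-- A parallel composition of two non-trivial processes cannot be branching bisimilar
to a good process with a depth-0 `a`-derivative. -/
theorem split_contra {a : Name} {v w g g₀ : Proc Name} (hg : Good a g)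
    (hbb : BB (Proc.par v w) g) (hv : 1 ≤ dep v) (hw : 1 ≤ dep w)
    (hm : PTrans g (act_a a) g₀) (h0 : dep g₀ = 0) : False := by
  obtain ⟨u₁, u₂, he, ht, hbb₁, hbb₂⟩ := L1c hbb hg hm
  obtain ⟨v₁, w₁, rfl, _, _, hdv, hdw, _⟩ := comp_eps hg hbb he
  have hdu₂ : dep u₂ = 0 := by rw [dep_bb hbb₂, h0]
  simp only [act_a] at ht
  cases ht with
  | parL h' =>
    rw [dep_par] at hdu₂
    omega
  | parR h' =>
    rw [dep_par] at hdu₂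
    omega

/-- Components of a parallel composition bisimilar to a chain are themselves chains. -/
theorem chaincomp {a : Name} {x z : Proc Name} {k : ℕ}
    (hbb : BB (Proc.par x z) (apow a k)) : BB x (apow a (dep x)) := by
  set R : Proc Name → Proc Name → Prop := fun u v =>
    (∃ z' k', v = apow a (dep u) ∧ BB (Proc.par u z') (apow a k')) ∨
    (∃ z' k', u = apow a (dep v) ∧ BB (Proc.par v z') (apow a k')) with hR
  have hsum : ∀ (u z' : Proc Name) (k' : ℕ), BB (Proc.par u z') (apow a k') →
      dep u + dep z' = k' := by
    intro u z' k' hb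
    have := dep_bb hb
    rwa [dep_par, dep_apow] at this
  refine ⟨R, ⟨?_, ?_⟩, Or.inl ⟨z, k, rfl, hbb⟩⟩
  · rintro u v (h | h)
    · exact Or.inr h
    · exact Or.inl h
  · rintro u v (⟨z', k', rfl, hb⟩ | ⟨z', k', rfl, hb⟩) μ u' hstep
    · -- u is a generic process, v = apow a (dep u)
      have hs := hsum u z' k' hb
      cases μ with
      | tau =>
        have hbb' : BB (Proc.par u' z') (apow a k') :=
          L1a1 hb (Good.seq (seqA_apow a k')) (PTrans.parL hstep)
        have hs' := hsum u' z' k' hbb'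
        have hdep : dep u' = dep u := by
          have := dep_step hstep
          simp only [actW] at this
          omega
        refine Or.inl ⟨rfl, Or.inl ⟨z', k', by rw [hdep], hbb'⟩⟩
      | obs β =>
        obtain ⟨hβ, g', hg', hbb'⟩ :=
          L1b hb (Good.seq (seqA_apow a k')) (PTrans.parL hstep)
        obtain ⟨k'', hk, _, rfl⟩ := apow_step hg'
        have hs' := hsum u' z' k'' hbb'
        have hdep : dep u' = dep u - 1 ∧ 1 ≤ dep u := by omega
        refine Or.inr ⟨apow a (dep u), apow a (dep u'), Relation.ReflTransGen.refl, ?_,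
          Or.inl ⟨z', k', rfl, hb⟩, Or.inl ⟨z', k'', rfl, hbb'⟩⟩
        rw [hβ]
        have h1 : dep u = dep u' + 1 := by omega
        rw [h1]
        exact apow_move a _
    · -- u = apow a (dep v), v generic
      have hs := hsum v z' k' hb
      obtain ⟨m, hm, hμ, rfl⟩ := apow_step hstep
      obtain ⟨v₁, β, v₂, hev, hsv, hdeep⟩ :=
        dep_max_move (deep_dep v) (by omega : 1 ≤ dep v)
      have hbb₁ : BB (Proc.par v₁ z') (apow a k') :=
        L1a hb (Good.seq (seqA_apow a k')) (eps_parL hev)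
      have hdv₁ : dep v₁ = dep v := by
        have h1 := dep_eps_le hev
        have h2 := hsum v₁ z' k' hbb₁
        omega
      obtain ⟨hβ, g', hg', hbb₂⟩ :=
        L1b hbb₁ (Good.seq (seqA_apow a k')) (PTrans.parL hsv)
      obtain ⟨k'', hk, _, rfl⟩ := apow_step hg'
      have hdv₂ : dep v₂ = m := by
        have h2 := hsum v₂ z' k'' hbb₂
        have h3 := deep_le_dep hdeep
        have h4 := dep_step hsv
        simp only [actW] at h4
        omega
      subst hμ
      refine Or.inr ⟨v₁, v₂, hev, by rw [← hβ]; exact hsv,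
        Or.inr ⟨z', k', by rw [hdv₁], hbb₁⟩, Or.inr ⟨z', k'', by rw [hdv₂], hbb₂⟩⟩

theorem chaincompR {a : Name} {x z : Proc Name} {k : ℕ}
    (hbb : BB (Proc.par z x) (apow a k)) : BB x (apow a (dep x)) :=
  chaincomp (bb_trans (bb_par_swap x z) hbb)

theorem not_bb_apow_ale {a : Name} {k i : ℕ} (hi : 2 ≤ i) : ¬ BB (apow a k) (ale a i) := by
  intro h
  have hdep : k = i := by
    have := dep_bb h
    simpa using this
  subst hdep
  obtain ⟨x₁, x₂, he, ht, _, hb2⟩ :=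
    L1c h (Good.seq (seqA_ale a k)) (ale_move a (by omega : 0 < k))
  have hx₁ : x₁ = apow a k := eps_good (Good.seq (seqA_apow a k)) he
  subst hx₁
  obtain ⟨k', hk, _, rfl⟩ := apow_step ht
  have : dep (apow a k') = dep (apow a 0) := dep_bb hb2
  simp at this
  omega

theorem not_bb_powsucc_parale {a : Name} {i : ℕ} (hi : 2 ≤ i) :
    ¬ BB (apow a (i + 1)) (Proc.par (apow a 1) (ale a i)) := by
  intro h
  have hg : Good a (Proc.par (apow a 1) (ale a i)) :=
    Good.par (seqA_apow a 1) (seqA_ale a i)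
  obtain ⟨x₁, x₂, he, ht, _, hb2⟩ := L1c h hg (PTrans.parL (apow_move a 0))
  have hx₁ : x₁ = apow a (i + 1) := eps_good (Good.seq (seqA_apow a (i + 1))) he
  subst hx₁
  obtain ⟨k', hk, _, rfl⟩ := apow_step ht
  have hkk : k' = i := by omega
  have hb3 : BB (apow a k') (ale a i) := bb_trans hb2 (bb_nil_par (ale a i))
  rw [hkk] at hb3
  exact not_bb_apow_ale hi hb3

end CCSAux

namespace CCSAux

variable {Name : Type}

/-! ### cancellation of an `a`-component against canonical forms -/

def FamP (a : Name) (y : Proc Name) : Prop :=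
  (∃ i, 2 ≤ i ∧ y = ale a i) ∨ (∃ j, y = apow a j)

theorem famP_seqA {a : Name} {y : Proc Name} (h : FamP a y) : SeqA a y := by
  rcases h with ⟨i, _, rfl⟩ | ⟨j, rfl⟩
  · exact seqA_ale a i
  · exact seqA_apow a j

theorem famP_deriv {a : Name} {y y' : Proc Name} {μ : Act Name} (h : FamP a y)
    (hstep : PTrans y μ y') : μ = act_a a ∧ ∃ j, y' = apow a j := by
  rcases h with ⟨i, _, rfl⟩ | ⟨j, rfl⟩
  · obtain ⟨hμ, j, _, rfl⟩ := ale_step hstep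
    exact ⟨hμ, j, rfl⟩
  · obtain ⟨k', _, hμ, rfl⟩ := apow_step hstep
    exact ⟨hμ, k', rfl⟩

theorem canc {a : Name} {x y : Proc Name} (hf : FamP a y)
    (hbb : BB (Proc.par (apow a 1) x) (Proc.par (apow a 1) y)) : BB x y := by
  set A : Proc Name := apow a 1 with hA
  set R : Proc Name → Proc Name → Prop := fun u v =>
    BB u v ∨ (FamP a v ∧ BB (Proc.par A u) (Proc.par A v)) ∨
      (FamP a u ∧ BB (Proc.par A v) (Proc.par A u)) with hRdef
  have hgoodA : ∀ y₀ : Proc Name, SeqA a y₀ → Good a (Proc.par A y₀) :=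
    fun y₀ hy₀ => Good.par (seqA_apow a 1) hy₀
  have hdepA : dep A = 1 := by simp [hA]
  refine ⟨R, ⟨?_, ?_⟩, Or.inr (Or.inl ⟨hf, hbb⟩)⟩
  · rintro u v (h | ⟨h1, h2⟩ | ⟨h1, h2⟩)
    · exact Or.inl (bb_symm h)
    · exact Or.inr (Or.inr ⟨h1, h2⟩)
    · exact Or.inr (Or.inl ⟨h1, h2⟩)
  · rintro u v (h | ⟨hfv, hb⟩ | ⟨hfu, hb⟩) μ u' hstep
    · -- plain BB pair
      rcases bb_isBisim.2 _ _ h _ _ hstep with ⟨hμ, h'⟩ | ⟨q'', q', he, ht, h1, h2⟩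
      · exact Or.inl ⟨hμ, Or.inl h'⟩
      · exact Or.inr ⟨q'', q', he, ht, Or.inl h1, Or.inl h2⟩
    · -- pair (u, v) with v canonical
      have hgood := hgoodA v (famP_seqA hfv)
      have hdep : dep u = dep v := by
        have := dep_bb hb
        rw [dep_par, dep_par, hdepA] at this
        omega
      cases μ with
      | tau =>
        have hbb' := L1a1 hb hgood (PTrans.parR hstep)
        exact Or.inl ⟨rfl, Or.inr (Or.inl ⟨hfv, hbb'⟩)⟩
      | obs β =>
        obtain ⟨hβ, t', ht', hbb'⟩ := L1b hb hgood (PTrans.parR hstep)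
        simp only [act_a] at ht'
        cases ht' with
        | parL h' =>
          -- the A-component answered: refute or use chain structure
          obtain ⟨kA, hkA, _, hTA⟩ := apow_step h'
          have h0 : kA = 0 := by omega
          subst h0
          subst hTA
          have hbu' : BB (Proc.par A u') v := bb_trans hbb' (bb_nil_par v)
          have hdep' : 1 + dep u' = dep v := by
            have := dep_bb hbu'
            rw [dep_par, hdepA] at this
            omega
          rcases hfv with ⟨i, hi2, rfl⟩ | ⟨j, rfl⟩
          · -- v = ale a i : impossible by the split lemma
            exfalso
            refine split_contra (Good.seq (seqA_ale a i)) hbu' (by omega) ?_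
              (ale_move a (by omega : 0 < i)) (by simp)
            have : dep (ale a i) = i := by simp
            omega
          · -- v = apow a j : cancellation via chains
            have hchain : BB u' (apow a (dep u')) := chaincompR hbu'
            have hj : j = dep u' + 1 := by
              have : dep (apow a j) = j := by simp
              omega
            refine Or.inr ⟨apow a j, apow a (dep u'), Relation.ReflTransGen.refl, ?_,
              Or.inr (Or.inl ⟨Or.inr ⟨j, rfl⟩, hb⟩), Or.inl hchain⟩
            rw [hβ, hj]
            exact apow_move a _
        | parR h' =>
          -- the canonical component answered
          obtain ⟨_, j', hy'⟩ := famP_deriv hfv h'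
          refine Or.inr ⟨v, _, Relation.ReflTransGen.refl, by rw [hβ]; exact h',
            Or.inr (Or.inl ⟨hfv, hb⟩), Or.inr (Or.inl ⟨Or.inr ⟨j', hy'⟩, hbb'⟩)⟩
    · -- pair (u, v) with u canonical (flip)
      obtain ⟨hμ, j₀, hu₀⟩ := famP_deriv hfu hstep
      subst hμ
      have hgood := hgoodA u (famP_seqA hfu)
      have hmove : PTrans (Proc.par A u) (act_a a) (Proc.par A u') := PTrans.parR hstep
      obtain ⟨w₁, w₂, he, ht, hbb₁, hbb₂⟩ := L1c hb hgood hmove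
      obtain ⟨A₁, v₁, hw₁, heA, hev, _, hdv₁, hbbw₁⟩ := comp_eps hgood hb he
      have hA₁ : A₁ = A := eps_good (Good.seq (seqA_apow a 1)) heA
      subst hA₁
      subst hw₁
      have hdep : dep v = dep u := by
        have := dep_bb hb
        rw [dep_par, dep_par, hdepA] at this
        omega
      simp only [act_a] at ht
      cases ht with
      | parR h₂ =>
        -- v₁ answered with its own a-move
        exact Or.inr ⟨v₁, _, hev, h₂, Or.inr (Or.inr ⟨hfu, hbbw₁⟩),
          Or.inr (Or.inr ⟨Or.inr ⟨j₀, hu₀⟩, hbb₂⟩)⟩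
      | parL h₂ =>
        -- the fresh A fired on the matching side
        obtain ⟨kA, hkA, _, hTA⟩ := apow_step h₂
        have h0 : kA = 0 := by omega
        subst h0
        subst hTA
        have hv₁ : BB v₁ (Proc.par A u') :=
          bb_trans (bb_symm (bb_nil_par v₁)) hbb₂
        subst hu₀
        have hv₁' : BB v₁ (apow a (1 + j₀)) := bb_trans hv₁ (bb_pow_par a 1 j₀)
        rcases hfu with ⟨i, hi2, rfl⟩ | ⟨j, rfl⟩
        · -- u = ale a i : contradiction
          exfalso
          have hdv : dep v₁ = i := by
            have : dep (ale a i) = i := by simp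
            omega
          have hj₀ : 1 + j₀ = i := by
            have := dep_bb hv₁'
            simp at this
            omega
          have hc1 : BB (Proc.par A v₁) (Proc.par A (apow a i)) := by
            refine bb_par_cong (bb_refl A) ?_
            rw [← hj₀]
            exact hv₁'
          have hc2 : BB (Proc.par A (apow a i)) (Proc.par A (ale a i)) :=
            bb_trans (bb_symm hc1) hbbw₁
          have hc3 : BB (apow a (1 + i)) (Proc.par A (ale a i)) :=
            bb_trans (bb_symm (bb_pow_par a 1 i)) hc2
          have hc4 : BB (apow a (i + 1)) (Proc.par (apow a 1) (ale a i)) := by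
            rw [Nat.add_comm i 1]
            exact hc3
          exact not_bb_powsucc_parale hi2 hc4
        · -- u = apow a j : reroute through the chain
          have hj : j = j₀ + 1 := by
            obtain ⟨k', hk', _, hu'⟩ := apow_step hstep
            have : apow a k' = apow a j₀ := by rw [← hu']
            have hd : k' = j₀ := by
              have := congrArg dep this
              simpa using this
            omega
          have hbv₁ : BB v₁ (apow a j) := by
            rw [hj]
            rw [Nat.add_comm 1 j₀] at hv₁'
            exact hv₁'
          obtain ⟨v₃, v₄, he₃, ht₃, hbb₃, hbb₄⟩ := L1c hbv₁ (Good.seq (seqA_apow a j))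
            (by rw [hj]; exact apow_move a j₀)
          refine Or.inr ⟨v₃, v₄, hev.trans he₃, ht₃, Or.inl (bb_symm hbb₃), ?_⟩
          exact Or.inl (bb_symm hbb₄)

end CCSAux

namespace CCSAux

variable {Name : Type}

theorem rbb_bb {x y : Proc Name} (h : RBB x y) : BB x y := by
  refine ⟨fun u v => BB u v ∨ (u = x ∧ v = y) ∨ (u = y ∧ v = x), ⟨?_, ?_⟩,
    Or.inr (Or.inl ⟨rfl, rfl⟩)⟩
  · rintro u v (hh | ⟨rfl, rfl⟩ | ⟨rfl, rfl⟩)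
    · exact Or.inl (bb_symm hh)
    · exact Or.inr (Or.inr ⟨rfl, rfl⟩)
    · exact Or.inr (Or.inl ⟨rfl, rfl⟩)
  · rintro u v (hh | ⟨rfl, rfl⟩ | ⟨rfl, rfl⟩) μ u' hstep
    · rcases bb_isBisim.2 _ _ hh _ _ hstep with ⟨hμ, h'⟩ | ⟨q'', q', he, ht, h1, h2⟩
      · exact Or.inl ⟨hμ, Or.inl h'⟩
      · exact Or.inr ⟨q'', q', he, ht, Or.inl h1, Or.inl h2⟩
    · obtain ⟨y', hy', hbb⟩ := h.1 μ u' hstep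
      exact Or.inr ⟨_, y', Relation.ReflTransGen.refl, hy', Or.inr (Or.inl ⟨rfl, rfl⟩),
        Or.inl hbb⟩
    · obtain ⟨x', hx', hbb⟩ := h.2 μ u' hstep
      exact Or.inr ⟨_, x', Relation.ReflTransGen.refl, hx', Or.inr (Or.inr ⟨rfl, rfl⟩),
        Or.inl (bb_symm hbb)⟩

theorem rbb_nil_of_no_moves {x : Proc Name} (h : ∀ μ x', ¬ PTrans x μ x') : RBB x Proc.nil := by
  constructor
  · intro μ x' hstep
    exact absurd hstep (h μ x')
  · intro μ y' hstep
    exact absurd hstep (by intro hh; cases hh)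

theorem exists_move_of_not_rbb_nil {x : Proc Name} (h : ¬ RBB x Proc.nil) :
    ∃ μ x', PTrans x μ x' := by
  by_contra hc
  push_neg at hc
  exact h (rbb_nil_of_no_moves hc)

theorem dep_pn' (a : Name) {n : ℕ} (hn : 2 ≤ n) : dep (pn a n) = n + 1 := by
  obtain ⟨m, rfl⟩ : ∃ m, n = m + 2 := ⟨n - 2, by omega⟩
  rw [dep_pn]

theorem dep_A (a : Name) : dep (Proc.pre (act_a a) (Proc.nil : Proc Name)) = 1 := by
  simp [dep, actW, act_a]

theorem atarget_step {a : Name} {n : ℕ} (hn : 2 ≤ n) {μ : Act Name} {t : Proc Name}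
    (h : PTrans (Proc.par (Proc.pre (act_a a) Proc.nil) (pn a n)) μ t) :
    μ = act_a a ∧ (t = Proc.par Proc.nil (pn a n) ∨
      ∃ i, 2 ≤ i ∧ i ≤ n ∧ t = Proc.par (Proc.pre (act_a a) Proc.nil) (ale a i)) := by
  cases h with
  | parL h' =>
    cases h'
    exact ⟨rfl, Or.inl rfl⟩
  | parR h' =>
    obtain ⟨hμ, i, h1, h2, rfl⟩ := pn_step hn h'
    exact ⟨hμ, Or.inr ⟨i, h1, h2, rfl⟩⟩
  | comm h1 h2 =>
    exfalso
    cases h1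
    have := (pn_step hn h2).1
    simp [Obs.bar, act_a] at this

section Main

variable {a : Name} {n : ℕ} {p q : Proc Name}

theorem root_match (hn : 2 ≤ n)
    (h : RBB (Proc.par p q) (Proc.par (Proc.pre (act_a a) Proc.nil) (pn a n)))
    {μ : Act Name} {r : Proc Name} (hstep : PTrans (Proc.par p q) μ r) :
    μ = act_a a ∧ ∃ t, BB r t ∧ (t = Proc.par Proc.nil (pn a n) ∨
      ∃ i, 2 ≤ i ∧ i ≤ n ∧ t = Proc.par (Proc.pre (act_a a) Proc.nil) (ale a i)) := by
  obtain ⟨t, ht, hbb⟩ := h.1 μ r hstep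
  obtain ⟨hμ, hcase⟩ := atarget_step hn ht
  exact ⟨hμ, t, hbb, hcase⟩

theorem root_label_p (hn : 2 ≤ n)
    (h : RBB (Proc.par p q) (Proc.par (Proc.pre (act_a a) Proc.nil) (pn a n)))
    {μ : Act Name} {p' : Proc Name} (hstep : PTrans p μ p') : μ = act_a a :=
  (root_match hn h (PTrans.parL hstep)).1

theorem root_label_q (hn : 2 ≤ n)
    (h : RBB (Proc.par p q) (Proc.par (Proc.pre (act_a a) Proc.nil) (pn a n)))
    {μ : Act Name} {q' : Proc Name} (hstep : PTrans q μ q') : μ = act_a a :=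
  (root_match hn h (PTrans.parR hstep)).1

theorem root_eps_triv {x u : Proc Name}
    (hroot : ∀ μ x', PTrans x μ x' → μ = act_a a) (he : EpsTrans x u) : u = x := by
  rcases eps_head he with rfl | ⟨c, hc, _⟩
  · rfl
  · exact absurd (hroot _ _ hc) (Ne.symm (act_a_ne_tau a))

theorem max_root_move {x : Proc Name}
    (hroot : ∀ μ x', PTrans x μ x' → μ = act_a a) (hd : 1 ≤ dep x) :
    ∃ x', PTrans x (act_a a) x' ∧ dep x' = dep x - 1 := by
  obtain ⟨x₁, β, x₂, he, hs, hdeep⟩ := dep_max_move (deep_dep x) hd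
  have hx₁ : x₁ = x := root_eps_triv hroot he
  subst hx₁
  have hβ : Act.obs β = act_a a := hroot _ _ hs
  rw [hβ] at hs
  refine ⟨x₂, hs, ?_⟩
  have h1 := deep_le_dep hdeep
  have h2 := dep_step hs
  simp [actW, act_a] at h2
  omega

theorem dep_sum (hn : 2 ≤ n)
    (h : RBB (Proc.par p q) (Proc.par (Proc.pre (act_a a) Proc.nil) (pn a n))) :
    dep p + dep q = n + 2 := by
  have := dep_bb (rbb_bb h)
  rw [dep_par, dep_par, dep_A, dep_pn' a hn] at this
  omega

theorem dep_p_pos (hn : 2 ≤ n)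
    (h : RBB (Proc.par p q) (Proc.par (Proc.pre (act_a a) Proc.nil) (pn a n)))
    (hp : ¬ RBB p Proc.nil) : 1 ≤ dep p := by
  obtain ⟨μ, p₀, h₀⟩ := exists_move_of_not_rbb_nil hp
  have hμ := root_label_p hn h h₀
  subst hμ
  exact deep_le_dep (Deep.obs h₀ (Deep.zero _))

theorem dep_q_pos (hn : 2 ≤ n)
    (h : RBB (Proc.par p q) (Proc.par (Proc.pre (act_a a) Proc.nil) (pn a n)))
    (hq : ¬ RBB q Proc.nil) : 1 ≤ dep q := by
  obtain ⟨μ, q₀, h₀⟩ := exists_move_of_not_rbb_nil hq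
  have hμ := root_label_q hn h h₀
  subst hμ
  exact deep_le_dep (Deep.obs h₀ (Deep.zero _))

/-- Part I: the two components cannot both have depth at least 2. -/
theorem partI (hn : 2 ≤ n)
    (h : RBB (Proc.par p q) (Proc.par (Proc.pre (act_a a) Proc.nil) (pn a n)))
    (h2p : 2 ≤ dep p) (h2q : 2 ≤ dep q) : False := by
  have hsum := dep_sum hn h
  have hmv : PTrans (Proc.par (Proc.pre (act_a a) Proc.nil) (pn a n)) (act_a a)
      (Proc.par Proc.nil (pn a n)) := PTrans.parL (PTrans.pre _ _)
  obtain ⟨r, hr, hbbr⟩ := h.2 _ _ hmv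
  cases hr with
  | parL h' =>
    rename_i p₁
    have hbb1 : BB (Proc.par p₁ q) (pn a n) := bb_trans hbbr (bb_nil_par _)
    have hdp₁ : dep p₁ + dep q = n + 1 := by
      have := dep_bb hbb1
      rw [dep_par, dep_pn' a hn] at this
      omega
    obtain ⟨q', hq', hdq'⟩ := max_root_move (fun μ x' hs => root_label_q hn h hs) (by omega)
    obtain ⟨_, g', hg', hbb2⟩ := L1b hbb1 (Good.seq (seqA_pn a n)) (PTrans.parR hq')
    obtain ⟨hμ, i, hi2, hin, rfl⟩ := pn_step hn hg'
    refine split_contra (Good.seq (seqA_ale a i)) hbb2 (by omega) (by omega)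
      (ale_move a (by omega : 0 < i)) (by simp)
  | parR h' =>
    rename_i q₁
    have hbb1 : BB (Proc.par p q₁) (pn a n) := bb_trans hbbr (bb_nil_par _)
    have hdq₁ : dep p + dep q₁ = n + 1 := by
      have := dep_bb hbb1
      rw [dep_par, dep_pn' a hn] at this
      omega
    obtain ⟨p', hp', hdp'⟩ := max_root_move (fun μ x' hs => root_label_p hn h hs) (by omega)
    obtain ⟨_, g', hg', hbb2⟩ := L1b hbb1 (Good.seq (seqA_pn a n)) (PTrans.parL hp')
    obtain ⟨hμ, i, hi2, hin, rfl⟩ := pn_step hn hg'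
    refine split_contra (Good.seq (seqA_ale a i)) hbb2 (by omega) (by omega)
      (ale_move a (by omega : 0 < i)) (by simp)

/-- Part II: if `dep p = 1` then the decomposition is as expected. -/
theorem partII (hn : 2 ≤ n)
    (h : RBB (Proc.par p q) (Proc.par (Proc.pre (act_a a) Proc.nil) (pn a n)))
    (hp : ¬ RBB p Proc.nil) (hP : dep p = 1) :
    RBB p (Proc.pre (act_a a) Proc.nil) ∧ RBB q (pn a n) := by
  have hsum := dep_sum hn h
  have hQ : dep q = n + 1 := by omega
  have hrbbpA : RBB p (Proc.pre (act_a a) Proc.nil) := by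
    constructor
    · intro μ p' hstep
      have hμ := root_label_p hn h hstep
      subst hμ
      refine ⟨Proc.nil, PTrans.pre _ _, ?_⟩
      apply bb_nil_of_dep_zero
      have := dep_step hstep
      simp [actW, act_a] at this
      omega
    · intro μ c' hstep
      cases hstep
      obtain ⟨μ₀, p₀, h₀⟩ := exists_move_of_not_rbb_nil hp
      have hμ₀ := root_label_p hn h h₀
      subst hμ₀
      refine ⟨p₀, h₀, ?_⟩
      apply bb_nil_of_dep_zero
      have := dep_step h₀
      simp [actW, act_a] at this
      omega
  have hbbpA : BB p (apow a 1) := rbb_bb hrbbpA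
  refine ⟨hrbbpA, ?_, ?_⟩
  · -- q's moves are matched by pn
    intro μ q₀ hstep
    obtain ⟨hμ, t, hbbt, hcase⟩ := root_match hn h (PTrans.parR hstep)
    subst hμ
    rcases hcase with rfl | ⟨i, hi2, hin, rfl⟩
    · -- t = 0 ∥ pn : impossible
      exfalso
      have hbbpn : BB (Proc.par p q₀) (pn a n) := bb_trans hbbt (bb_nil_par _)
      have hdq₀ : dep q₀ = n := by
        have := dep_bb hbbpn
        rw [dep_par, dep_pn' a hn] at this
        omega
      obtain ⟨x₁, β, x₂, he, hsx, hdeep⟩ :=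
        dep_max_move (deep_dep q₀) (by omega : 1 ≤ dep q₀)
      have hbb₁ : BB (Proc.par p x₁) (pn a n) :=
        L1a hbbpn (Good.seq (seqA_pn a n)) (eps_parR he)
      obtain ⟨_, g', hg', hbb₂⟩ := L1b hbb₁ (Good.seq (seqA_pn a n)) (PTrans.parR hsx)
      obtain ⟨_, i, hi2, hin, rfl⟩ := pn_step hn hg'
      have hx₂ : 1 ≤ dep x₂ := by
        have := deep_le_dep hdeep
        omega
      exact split_contra (Good.seq (seqA_ale a i)) hbb₂ (by omega) (by omega)
        (ale_move a (by omega : 0 < i)) (by simp)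
    · -- t = a ∥ ale a i
      have hc1 : BB (Proc.par (apow a 1) q₀) (Proc.par p q₀) :=
        bb_par_cong (bb_symm hbbpA) (bb_refl q₀)
      have hc2 : BB (Proc.par (apow a 1) q₀) (Proc.par (apow a 1) (ale a i)) :=
        bb_trans hc1 hbbt
      have hq₀ : BB q₀ (ale a i) := canc (Or.inl ⟨i, hi2, rfl⟩) hc2
      exact ⟨ale a i, pn_move a hi2 hin, hq₀⟩
  · -- pn's moves are matched by q
    intro μ s hstep
    obtain ⟨hμ, i, hi2, hin, rfl⟩ := pn_step hn hstep
    subst hμ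
    have hmv : PTrans (Proc.par (Proc.pre (act_a a) Proc.nil) (pn a n)) (act_a a)
        (Proc.par (Proc.pre (act_a a) Proc.nil) (ale a i)) := PTrans.parR (pn_move a hi2 hin)
    obtain ⟨r, hr, hbbr⟩ := h.2 _ _ hmv
    cases hr with
    | parR h' =>
      rename_i q₀
      have hc1 : BB (Proc.par (apow a 1) q₀) (Proc.par p q₀) :=
        bb_par_cong (bb_symm hbbpA) (bb_refl q₀)
      have hc2 : BB (Proc.par (apow a 1) q₀) (Proc.par (apow a 1) (ale a i)) :=
        bb_trans hc1 hbbr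
      exact ⟨q₀, h', canc (Or.inl ⟨i, hi2, rfl⟩) hc2⟩
    | parL h' =>
      rename_i p₁
      have hdp₁ : dep p₁ + dep q = 1 + i := by
        have := dep_bb hbbr
        rw [dep_par, dep_par, dep_A] at this
        simp at this
        omega
      have hp₁0 : dep p₁ = 0 := by omega
      have hq1 : BB (Proc.par p₁ q) q :=
        bb_trans (bb_par_cong (bb_nil_of_dep_zero hp₁0) (bb_refl q)) (bb_nil_par q)
      have hc : BB q (Proc.par (apow a 1) (ale a i)) := bb_trans (bb_symm hq1) hbbr
      obtain ⟨q₁, q₂, he, ht, _, hbb₂⟩ :=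
        L1c hc (Good.par (seqA_apow a 1) (seqA_ale a i)) (PTrans.parL (apow_move a 0))
      have hq₁ : q₁ = q := root_eps_triv (fun μ x' hs => root_label_q hn h hs) he
      subst hq₁
      exact ⟨q₂, ht, bb_trans hbb₂ (bb_nil_par _)⟩

end Main

theorem tt_swap {x y r : Proc Name} {μ : Act Name} (hstep : PTrans (Proc.par y x) μ r) :
    ∃ r', PTrans (Proc.par x y) μ r' ∧ BB r r' := by
  cases hstep with
  | parL h' => exact ⟨_, PTrans.parR h', bb_par_swap _ _⟩
  | parR h' => exact ⟨_, PTrans.parL h', bb_par_swap _ _⟩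
  | comm h1 h2 =>
    refine ⟨_, PTrans.comm h2 ?_, bb_par_swap _ _⟩
    rw [bar_bar]
    exact h1

theorem rbb_par_swap {x y z : Proc Name} (h : RBB (Proc.par x y) z) :
    RBB (Proc.par y x) z := by
  constructor
  · intro μ r hstep
    obtain ⟨r', hr', hbb⟩ := tt_swap hstep
    obtain ⟨z', hz', hbb2⟩ := h.1 _ _ hr'
    exact ⟨z', hz', bb_trans hbb hbb2⟩
  · intro μ z' hstep
    obtain ⟨r', hr', hbb2⟩ := h.2 _ _ hstep
    obtain ⟨r, hrz, hbb⟩ := tt_swap (x := y) (y := x) hr'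
    exact ⟨r, hrz, bb_trans (bb_symm hbb) hbb2⟩

end CCSAux

open CCSAux in
/-- parallel components of a process that is rooted branching
bisimilar to `a ∥ p_n`. -/
theorem apn_par_rbb {Name : Type} (a : Name) (n : ℕ) (hn : 2 ≤ n)
    (p q : Proc Name)
    (h : RBB (Proc.par p q) (Proc.par (Proc.pre (act_a a) Proc.nil) (pn a n)))
    (hp : ¬ RBB p Proc.nil) (hq : ¬ RBB q Proc.nil) :
    (RBB p (Proc.pre (act_a a) Proc.nil) ∧ RBB q (pn a n)) ∨
    (RBB p (pn a n) ∧ RBB q (Proc.pre (act_a a) Proc.nil)) := by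
  have h1 := dep_p_pos hn h hp
  have h2 := dep_q_pos hn h hq
  by_cases hP : dep p = 1
  · exact Or.inl (partII hn h hp hP)
  · have hQ : dep q = 1 := by
      by_contra hq1
      exact partI hn h (by omega) (by omega)
    obtain ⟨hA, hpn⟩ := partII hn (rbb_par_swap h) hq hQ
    exact Or.inr ⟨hpn, hA⟩
end

section
/- For every i ≥ 2 the CCS process a^{≤i} is indecomposable, and for every n ≥ 2 the CCS process p_n is indecomposable. -/
/-- A process is indecomposable if it is not branching bisimilar to `0` and
cannot be split (modulo `~BB`) into two parallel components that are both
not branching bisimilar to `0`. -/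
def Indecomposable {Name : Type} (p : Proc Name) : Prop :=
  ¬ BB p Proc.nil ∧
  ∀ p1 p2 : Proc Name, BB p (.par p1 p2) → BB p1 Proc.nil ∨ BB p2 Proc.nil

/-!
The invariant is the observable depth of a process: the largest number of visible actions on a
computation, with `∥` adding depths. Branching bisimilarity preserves it, and it vanishes exactly
on the processes `~BB 0`. If `p ~BB p₁ ∥ p₂` with both components of positive depth, then a
visible step of `p` is matched from a state `r₁ ∥ r₂` of the same depth, so both `r₁` and `r₂`
still have full depth, and the step moves only one of them: no visible step of `p` can lead to a
process `~BB 0`. This rules out `a^{≤i} →a 0`. The process `p_n` has no τ-steps and its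
derivatives `a^{≤i}` are indecomposable; so a visible step of `p₁` in `p₁ ∥ p₂ ~BB p_n` must kill
`p₁`, i.e. `p₁` and likewise `p₂` have depth one, which contradicts the depth `n + 1 ≥ 3` of `p_n`.
-/

section

variable {Name : Type}

def Act.weight : Act Name → ℕ
  | .obs _ => 1
  | .tau => 0

def Proc.depth : Proc Name → ℕ
  | .nil => 0
  | .pre μ p => μ.weight + p.depth
  | .plus p q => max p.depth q.depth
  | .par p q => p.depth + q.depth

def WeakObsTrans (p : Proc Name) (α : Obs Name) (p' : Proc Name) : Prop :=
  ∃ p'', EpsTrans p p'' ∧ PTrans p'' (.obs α) p'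

namespace Proc

theorem weight_add_depth_le_of_trans {p p' : Proc Name} {μ : Act Name} (h : PTrans p μ p') :
    μ.weight + p'.depth ≤ p.depth := by
  induction h with
  | pre => simp [depth]
  | comm _ _ ih₁ ih₂ => simp only [depth, Act.weight] at *; omega
  | _ => simp only [depth] at *; omega

theorem depth_le_of_epsTrans {p p' : Proc Name} (h : EpsTrans p p') : p'.depth ≤ p.depth := by
  induction h with
  | refl => exact le_rfl
  | tail _ hstep ih =>
    have := weight_add_depth_le_of_trans hstep
    simp only [Act.weight] at this
    omega

theorem depth_lt_of_weakObsTrans {p p' : Proc Name} {α : Obs Name} (h : WeakObsTrans p α p') :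
    p'.depth < p.depth := by
  obtain ⟨p'', he, ht⟩ := h
  have := weight_add_depth_le_of_trans ht
  have := depth_le_of_epsTrans he
  simp only [Act.weight] at *
  omega

theorem exists_eq_par_of_trans_par {p q r : Proc Name} {μ : Act Name}
    (h : PTrans (.par p q) μ r) :
    ∃ p' q', r = .par p' q' ∧ p'.depth ≤ p.depth ∧ q'.depth ≤ q.depth := by
  cases h with
  | parL h => exact ⟨_, q, rfl, by have := weight_add_depth_le_of_trans h; omega, le_rfl⟩
  | parR h => exact ⟨p, _, rfl, le_rfl, by have := weight_add_depth_le_of_trans h; omega⟩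
  | comm h₁ h₂ =>
    exact ⟨_, _, rfl, by have := weight_add_depth_le_of_trans h₁; omega,
      by have := weight_add_depth_le_of_trans h₂; omega⟩

theorem exists_eq_par_of_epsTrans_par {p q r : Proc Name} (h : EpsTrans (.par p q) r) :
    ∃ p' q', r = .par p' q' ∧ p'.depth ≤ p.depth ∧ q'.depth ≤ q.depth := by
  induction h with
  | refl => exact ⟨p, q, rfl, le_rfl, le_rfl⟩
  | tail _ hstep ih =>
    obtain ⟨p₁, q₁, rfl, hp₁, hq₁⟩ := ih
    obtain ⟨p₂, q₂, rfl, hp₂, hq₂⟩ := exists_eq_par_of_trans_par hstep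
    exact ⟨p₂, q₂, rfl, hp₂.trans hp₁, hq₂.trans hq₁⟩

theorem min_depth_le_of_obs_trans_par {p q r : Proc Name} {α : Obs Name}
    (h : PTrans (.par p q) (.obs α) r) : min p.depth q.depth ≤ r.depth := by
  cases h with
  | parL => simp only [depth]; omega
  | parR => simp only [depth]; omega

end Proc

theorem EpsTrans.parL {p p' : Proc Name} (q : Proc Name) (h : EpsTrans p p') :
    EpsTrans (.par p q) (.par p' q) :=
  Relation.ReflTransGen.lift (fun x => Proc.par x q) (fun _ _ (h : PTrans _ .tau _) => h.parL) _ _ h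

theorem EpsTrans.parR (p : Proc Name) {q q' : Proc Name} (h : EpsTrans q q') :
    EpsTrans (.par p q) (.par p q') :=
  Relation.ReflTransGen.lift (Proc.par p) (fun _ _ (h : PTrans _ .tau _) => h.parR) _ _ h

namespace WeakObsTrans

variable {p p' : Proc Name} {α : Obs Name}

theorem plusL (q : Proc Name) (h : WeakObsTrans p α p') : WeakObsTrans (.plus p q) α p' := by
  obtain ⟨p'', he, ht⟩ := h
  rcases he.cases_head with rfl | ⟨c, hc, hrest⟩
  · exact ⟨_, .refl, ht.plusL⟩
  · exact ⟨p'', .head hc.plusL hrest, ht⟩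

theorem plusR (q : Proc Name) (h : WeakObsTrans p α p') : WeakObsTrans (.plus q p) α p' := by
  obtain ⟨p'', he, ht⟩ := h
  rcases he.cases_head with rfl | ⟨c, hc, hrest⟩
  · exact ⟨_, .refl, ht.plusR⟩
  · exact ⟨p'', .head hc.plusR hrest, ht⟩

theorem parL (q : Proc Name) (h : WeakObsTrans p α p') :
    WeakObsTrans (.par p q) α (.par p' q) :=
  let ⟨_, he, ht⟩ := h; ⟨_, he.parL q, ht.parL⟩

theorem parR (q : Proc Name) (h : WeakObsTrans p α p') :
    WeakObsTrans (.par q p) α (.par q p') :=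
  let ⟨_, he, ht⟩ := h; ⟨_, he.parR q, ht.parR⟩

theorem tau_pre (h : WeakObsTrans p α p') : WeakObsTrans (.pre .tau p) α p' :=
  let ⟨_, he, ht⟩ := h; ⟨_, .head (.pre _ _) he, ht⟩

theorem trans_of_stable
    (hτ : ∀ p'', ¬ PTrans p .tau p'') (h : WeakObsTrans p α p') : PTrans p (.obs α) p' := by
  obtain ⟨p'', he, ht⟩ := h
  rcases he.cases_head with rfl | ⟨c, hc, -⟩
  · exact ht
  · exact absurd hc (hτ c)

end WeakObsTrans

theorem Proc.exists_weakObsTrans_of_depth_pos :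
    ∀ p : Proc Name, 0 < p.depth → ∃ α p', WeakObsTrans p α p' ∧ p'.depth + 1 = p.depth
  | .nil, h => by simp [depth] at h
  | .pre (.obs α) q, _ => ⟨α, q, ⟨_, .refl, .pre _ _⟩, by simp [depth, Act.weight]; omega⟩
  | .pre .tau q, h => by
    simp only [depth, Act.weight, zero_add] at h
    obtain ⟨α, p', hw, hd⟩ := exists_weakObsTrans_of_depth_pos q h
    exact ⟨α, p', hw.tau_pre, by simp [depth, Act.weight, hd]⟩
  | .plus q r, h => by
    simp only [depth] at h
    rcases le_total r.depth q.depth with hle | hle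
    · obtain ⟨α, p', hw, hd⟩ := exists_weakObsTrans_of_depth_pos q (by omega)
      exact ⟨α, p', hw.plusL r, by simp only [depth]; omega⟩
    · obtain ⟨α, p', hw, hd⟩ := exists_weakObsTrans_of_depth_pos r (by omega)
      exact ⟨α, p', hw.plusR q, by simp only [depth]; omega⟩
  | .par q r, h => by
    simp only [depth] at h
    rcases Nat.eq_zero_or_pos q.depth with hq | hq
    · obtain ⟨α, p', hw, hd⟩ := exists_weakObsTrans_of_depth_pos r (by omega)
      exact ⟨α, .par q p', hw.parR q, by simp only [depth]; omega⟩
    · obtain ⟨α, p', hw, hd⟩ := exists_weakObsTrans_of_depth_pos q hq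
      exact ⟨α, .par p' r, hw.parL r, by simp only [depth]; omega⟩

namespace BB

variable {p q : Proc Name}

theorem symm (h : BB p q) : BB q p :=
  let ⟨R, hR, hpq⟩ := h; ⟨R, hR, hR.1 hpq⟩

theorem exists_epsTrans {p' : Proc Name} (h : BB p q) (he : EpsTrans p p') :
    ∃ q', EpsTrans q q' ∧ BB p' q' := by
  induction he with
  | refl => exact ⟨q, .refl, h⟩
  | tail _ hstep ih =>
    obtain ⟨q₁, hq₁, R, hR, hr⟩ := ih
    rcases hR.2 _ _ hr _ _ hstep with ⟨-, hr'⟩ | ⟨q'', q', he, ht, -, hr'⟩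
    · exact ⟨q₁, hq₁, R, hR, hr'⟩
    · exact ⟨q', hq₁.trans (he.tail ht), R, hR, hr'⟩

theorem exists_of_obs_trans {p' : Proc Name} {α : Obs Name} (h : BB p q)
    (ht : PTrans p (.obs α) p') :
    ∃ q'' q', EpsTrans q q'' ∧ PTrans q'' (.obs α) q' ∧ BB p q'' ∧ BB p' q' := by
  obtain ⟨R, hR, hr⟩ := h
  rcases hR.2 _ _ hr _ _ ht with ⟨habs, -⟩ | ⟨q'', q', he, ht', hr'', hr'⟩
  · cases habs
  · exact ⟨q'', q', he, ht', ⟨R, hR, hr''⟩, R, hR, hr'⟩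

theorem exists_weakObsTrans {p' : Proc Name} {α : Obs Name} (h : BB p q)
    (hw : WeakObsTrans p α p') : ∃ q', WeakObsTrans q α q' ∧ BB p' q' := by
  obtain ⟨p'', he, ht⟩ := hw
  obtain ⟨q₁, hq₁, h₁⟩ := h.exists_epsTrans he
  obtain ⟨q'', q', he', ht', -, h'⟩ := h₁.exists_of_obs_trans ht
  exact ⟨q', ⟨q'', hq₁.trans he', ht'⟩, h'⟩

theorem depth_le (h : BB p q) : p.depth ≤ q.depth := by
  induction hn : p.depth using Nat.strong_induction_on generalizing p q with
  | _ n ih =>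
    rcases Nat.eq_zero_or_pos n with rfl | hpos
    · exact Nat.zero_le _
    obtain ⟨α, p', hw, hd⟩ := Proc.exists_weakObsTrans_of_depth_pos p (hn ▸ hpos)
    obtain ⟨q', hw', hbb⟩ := h.exists_weakObsTrans hw
    have := ih p'.depth (by omega) hbb rfl
    have := Proc.depth_lt_of_weakObsTrans hw'
    omega

theorem depth_eq (h : BB p q) : p.depth = q.depth :=
  le_antisymm h.depth_le h.symm.depth_le

end BB

theorem bb_nil_iff_depth_eq_zero {p : Proc Name} : BB p .nil ↔ p.depth = 0 := by
  refine ⟨fun h => by simpa [Proc.depth] using h.depth_eq, fun h => ?_⟩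
  refine ⟨fun x y => (x.depth = 0 ∧ y = .nil) ∨ (y.depth = 0 ∧ x = .nil),
    ⟨fun x y hxy => hxy.symm, ?_⟩, .inl ⟨h, rfl⟩⟩
  rintro x y (⟨hx, rfl⟩ | ⟨-, rfl⟩) μ x' ht
  · have hw := Proc.weight_add_depth_le_of_trans ht
    cases μ with
    | obs => simp [Act.weight] at hw; omega
    | tau => exact .inl ⟨rfl, .inl ⟨by simp [Act.weight] at hw; omega, rfl⟩⟩
  · cases ht

theorem indecomposable_iff_depth {p : Proc Name} :
    Indecomposable p ↔ p.depth ≠ 0 ∧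
      ∀ p₁ p₂ : Proc Name, BB p (.par p₁ p₂) → p₁.depth = 0 ∨ p₂.depth = 0 := by
  simp only [Indecomposable, bb_nil_iff_depth_eq_zero]

theorem indecomposable_of_obs_trans_of_depth_eq_zero {p p' : Proc Name} {α : Obs Name}
    (h : PTrans p (.obs α) p') (h' : p'.depth = 0) : Indecomposable p := by
  have hdepth := Proc.weight_add_depth_le_of_trans h
  simp only [Act.weight] at hdepth
  refine indecomposable_iff_depth.2 ⟨by omega, fun p₁ p₂ hbb => ?_⟩
  obtain ⟨q'', q', he, ht, hbb'', hbb'⟩ := hbb.exists_of_obs_trans h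
  obtain ⟨r₁, r₂, rfl, hr₁, hr₂⟩ := Proc.exists_eq_par_of_epsTrans_par he
  have := hbb.depth_eq
  have := hbb''.depth_eq
  have := hbb'.depth_eq
  have := Proc.min_depth_le_of_obs_trans_par ht
  simp only [Proc.depth] at *
  omega

theorem indecomposable_of_stable {p : Proc Name} (hτ : ∀ p', ¬ PTrans p .tau p')
    (hder : ∀ μ p', PTrans p μ p' → Indecomposable p') (hdepth : 3 ≤ p.depth) :
    Indecomposable p := by
  refine indecomposable_iff_depth.2 ⟨by omega, fun p₁ p₂ hbb => ?_⟩
  have hd := hbb.depth_eq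
  simp only [Proc.depth] at hd
  by_contra! hne
  obtain ⟨α₁, p₁', hw₁, hd₁⟩ := Proc.exists_weakObsTrans_of_depth_pos p₁ (by omega)
  obtain ⟨q₁, hq₁, hbb₁⟩ := hbb.symm.exists_weakObsTrans (hw₁.parL p₂)
  have h₁ := (indecomposable_iff_depth.1 (hder _ _ (hq₁.trans_of_stable hτ))).2 _ _ hbb₁.symm
  obtain ⟨α₂, p₂', hw₂, hd₂⟩ := Proc.exists_weakObsTrans_of_depth_pos p₂ (by omega)
  obtain ⟨q₂, hq₂, hbb₂⟩ := hbb.symm.exists_weakObsTrans (hw₂.parR p₁)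
  have h₂ := (indecomposable_iff_depth.1 (hder _ _ (hq₂.trans_of_stable hτ))).2 _ _ hbb₂.symm
  omega

theorem depth_apow (a : Name) : ∀ i, (apow a i).depth = i
  | 0 => rfl
  | i + 1 => by simp [apow, Proc.depth, act_a, Act.weight, depth_apow a i]; omega

theorem depth_ale (a : Name) : ∀ i, (ale a i).depth = i
  | 0 => rfl
  | 1 => depth_apow a 1
  | i + 2 => by simp [ale, Proc.depth, depth_ale a (i + 1), depth_apow]

theorem depth_pn (a : Name) : ∀ n, 2 ≤ n → (pn a n).depth = n + 1
  | 2, _ => by simp [pn, Proc.depth, act_a, Act.weight, depth_ale]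
  | n + 3, _ => by
    simp [pn, Proc.depth, act_a, Act.weight, depth_ale, depth_pn a (n + 2) (by omega)]; omega

theorem ale_trans_nil (a : Name) : ∀ i, 1 ≤ i → PTrans (ale a i) (act_a a) .nil
  | 1, _ => .pre _ _
  | i + 2, _ => (ale_trans_nil a (i + 1) (by omega)).plusL

theorem pn_trans (a : Name) {μ : Act Name} {r : Proc Name} :
    ∀ n, PTrans (pn a n) μ r → μ = act_a a ∧ ∃ i, 1 ≤ i ∧ r = ale a i
  | 0, h | 1, h => by cases h
  | 2, h => by cases h; exact ⟨rfl, 2, by omega, rfl⟩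
  | n + 3, h => by
    cases h with
    | plusL h => exact pn_trans a (n + 2) h
    | plusR h => cases h; exact ⟨rfl, n + 3, by omega, rfl⟩

theorem ale_indecomposable (a : Name) {i : ℕ} (hi : 1 ≤ i) : Indecomposable (ale a i) :=
  indecomposable_of_obs_trans_of_depth_eq_zero (ale_trans_nil a i hi) rfl

end

/-- the processes `a^{≤i}` (for `i ≥ 2`) and `p_n` (for `n ≥ 2`)
are indecomposable. -/
theorem ale_pn_indecomposable {Name : Type} (a : Name) :
    (∀ i : ℕ, 2 ≤ i → Indecomposable (ale a i)) ∧
    (∀ n : ℕ, 2 ≤ n → Indecomposable (pn a n)) := by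
  refine ⟨fun i hi => ale_indecomposable a (by omega), fun n hn => ?_⟩
  refine indecomposable_of_stable (fun p' h => ?_) (fun μ p' h => ?_) ?_
  · cases (pn_trans a n h).1
  · obtain ⟨-, i, hi, rfl⟩ := pn_trans a n h
    exact ale_indecomposable a hi
  · rw [depth_pn a n hn]
    omega
end
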